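/- arXiv:2301.01367 — 6 statements merged into one kernel-verified Lean document; each statement's English description precedes it below -/
import Mathlib

section
/- For the symmetric one-sided allocation problem, the pure price of anarchy of any unit-sum fair mechanism is Ω(√n). Precisely: let n ≥ 4 be a perfect square, m = n, and ε ∈ (0, 1/n³]. Partition the agents into √n blocks of √n consecutive agents each, and define the unit-sum profile v by: agent i has value 1/n + ε for item b(i) (where b(i) = ⌈i/√n⌉ ∈ {1,…,√n} is its block index) and value 1/n − ε/(n−1) for every other item. Let M be any fair mechanism and let s be a profile that is a pure Nash equilibrium of M with respect to true valuations v. Then there exists a unit-sum profile v̄ — agreeing with v except that for each j ∈ {1,…,√n} one agent i_j of block j has v̄_{i_j}(j) = 1 and v̄_{i_j}(ℓ) = 0 for ℓ ≠ j — such that s is also a pure Nash equilibrium of M with respect to v̄, OPT(v̄) ≥ √n, and the social welfare of s under v̄ is at most 3. In particular the pure price of anarchy of every unit-sum fair mechanism is at least √n/3. -/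
/-!
In an equilibrium `s` of the block profile, agent `i`'s payoff is `b + (a - b) * p_i(c_i)`, where
`c_i` is the item of its block and `b < a`; so no unilateral deviation raises `p_i(c_i)`. An agent
whose valuation is the unit valuation on `c_i` cares about exactly the same quantity, hence `s`
remains an equilibrium when the valuations of some agents are replaced in this way. Item `j` is
allocated with total probability `1`, so some agent `i_j` of block `j` receives it with probability
at most `1/√n`. Sharpening the valuations of these `√n` agents, their payoffs sum to at most `1`
and the others' to at most `n (1/n + ε) ≤ 2`, while giving item `j` to `i_j` yields welfare `√n`.
-/

noncomputable section

/-- A unit-sum valuation on `m` items: nonnegative values summing to `1`. -/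
def IsUnitSum {m : ℕ} (w : Fin m → ℝ) : Prop :=
  (∀ j, 0 ≤ w j) ∧ ∑ j, w j = 1

/-- `p` is a randomized direct-revelation mechanism: on every unit-sum reported profile it
returns nonnegative allocation probabilities, each item being fully allocated. -/
def IsMechanism (n m : ℕ) (p : (Fin n → Fin m → ℝ) → Fin n → Fin m → ℝ) : Prop :=
  ∀ v : Fin n → Fin m → ℝ, (∀ i, IsUnitSum (v i)) →
    (∀ i j, 0 ≤ p v i j) ∧ (∀ j, ∑ i, p v i j = 1)

/-- The mechanism is fair: every agent receives `m/n` items in expectation. -/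
def IsFair (n m : ℕ) (p : (Fin n → Fin m → ℝ) → Fin n → Fin m → ℝ) : Prop :=
  ∀ v : Fin n → Fin m → ℝ, (∀ i, IsUnitSum (v i)) →
    ∀ i, ∑ j, p v i j = (m : ℝ) / (n : ℝ)

/-- Agent `i`'s expected payoff under true valuations `v'` when the profile `v` is
reported to the mechanism `p`. -/
def Mpayoff {n m : ℕ} (p : (Fin n → Fin m → ℝ) → Fin n → Fin m → ℝ)
    (v' v : Fin n → Fin m → ℝ) (i : Fin n) : ℝ :=
  ∑ j, p v i j * v' i j

/-- The unit-sum reported profile `v` is a pure Nash equilibrium of the mechanism `p` with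
respect to the true valuations `v'`. -/
def IsMNash {n m : ℕ} (p : (Fin n → Fin m → ℝ) → Fin n → Fin m → ℝ)
    (v' v : Fin n → Fin m → ℝ) : Prop :=
  (∀ i, IsUnitSum (v i)) ∧
  ∀ (i : Fin n) (w : Fin m → ℝ), IsUnitSum w →
    Mpayoff p v' (Function.update v i w) i ≤ Mpayoff p v' v i

open Finset

lemma IsFair.sum_eq_one {n : ℕ} {p : (Fin n → Fin n → ℝ) → Fin n → Fin n → ℝ} (hp : IsFair n n p)
    (hn : n ≠ 0) {u : Fin n → Fin n → ℝ} (hu : ∀ k, IsUnitSum (u k)) (i : Fin n) :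
    ∑ ℓ, p u i ℓ = 1 := by
  rw [hp u hu i, div_self (Nat.cast_ne_zero.2 hn)]

section Mechanism

variable {n m : ℕ} {p : (Fin n → Fin m → ℝ) → Fin n → Fin m → ℝ}

def peakVal (c : Fin m) (a b : ℝ) : Fin m → ℝ := fun ℓ => if ℓ = c then a else b

lemma sum_mul_peakVal (q : Fin m → ℝ) (c : Fin m) (a b : ℝ) :
    ∑ ℓ, q ℓ * peakVal c a b ℓ = b * ∑ ℓ, q ℓ + (a - b) * q c := by
  have h : ∀ ℓ, q ℓ * peakVal c a b ℓ = b * q ℓ + (a - b) * if ℓ = c then q ℓ else 0 := by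
    intro ℓ
    unfold peakVal
    split_ifs <;> ring
  simp_rw [h, sum_add_distrib, ← mul_sum, sum_ite_eq']
  simp

lemma peakVal_le {c ℓ : Fin m} {a b : ℝ} (hba : b ≤ a) : peakVal c a b ℓ ≤ a := by
  unfold peakVal
  split_ifs
  exacts [le_rfl, hba]

lemma isUnitSum_peakVal {c : Fin m} {a b : ℝ} (ha : 0 ≤ a) (hb : 0 ≤ b)
    (h : a + (m - 1) * b = 1) : IsUnitSum (peakVal c a b) := by
  refine ⟨fun ℓ => by unfold peakVal; split_ifs <;> assumption, ?_⟩
  have hsum := sum_mul_peakVal 1 c a b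
  simp only [Pi.one_apply, one_mul, sum_const, card_univ, Fintype.card_fin, nsmul_eq_mul,
    mul_one] at hsum
  rw [hsum]
  linarith

lemma isUnitSum_update {u : Fin n → Fin m → ℝ} (hu : ∀ k, IsUnitSum (u k)) {i : Fin n}
    {w : Fin m → ℝ} (hw : IsUnitSum w) : ∀ k, IsUnitSum (Function.update u i w k) :=
  (Function.forall_update_iff u fun _ w => IsUnitSum w).2 ⟨hw, fun k _ => hu k⟩

lemma Mpayoff_congr {v' v'' : Fin n → Fin m → ℝ} {i : Fin n} (h : v' i = v'' i)
    (u : Fin n → Fin m → ℝ) : Mpayoff p v' u i = Mpayoff p v'' u i := by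
  simp only [Mpayoff, h]

lemma Mpayoff_le_of_le {v' u : Fin n → Fin m → ℝ} {i : Fin n} {a : ℝ}
    (hp : ∀ ℓ, 0 ≤ p u i ℓ) (hu : ∑ ℓ, p u i ℓ = 1) (hv : ∀ ℓ, v' i ℓ ≤ a) :
    Mpayoff p v' u i ≤ a :=
  calc Mpayoff p v' u i ≤ ∑ ℓ, p u i ℓ * a :=
        sum_le_sum fun ℓ _ => mul_le_mul_of_nonneg_left (hv ℓ) (hp ℓ)
    _ = a := by rw [← sum_mul, hu, one_mul]

lemma Mpayoff_of_peakVal {v' u : Fin n → Fin m → ℝ} {i : Fin n} {c : Fin m} {a b : ℝ}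
    (hu : ∑ ℓ, p u i ℓ = 1) (hv : v' i = peakVal c a b) :
    Mpayoff p v' u i = b + (a - b) * p u i c := by
  rw [Mpayoff, hv, sum_mul_peakVal, hu, mul_one]

lemma Mpayoff_le_Mpayoff_iff_of_peakVal {v' u u' : Fin n → Fin m → ℝ} {i : Fin n} {c : Fin m}
    {a b : ℝ} (hab : b < a) (hu : ∑ ℓ, p u i ℓ = 1) (hu' : ∑ ℓ, p u' i ℓ = 1)
    (hv : v' i = peakVal c a b) :
    Mpayoff p v' u i ≤ Mpayoff p v' u' i ↔ p u i c ≤ p u' i c := by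
  rw [Mpayoff_of_peakVal hu hv, Mpayoff_of_peakVal hu' hv, add_le_add_iff_left,
    mul_le_mul_iff_right₀ (sub_pos.2 hab)]

def withUnitPeaks (v : Fin n → Fin m → ℝ) (S : Finset (Fin n)) (c : Fin n → Fin m) :
    Fin n → Fin m → ℝ :=
  fun i => if i ∈ S then peakVal (c i) 1 0 else v i

variable {v : Fin n → Fin m → ℝ} {S : Finset (Fin n)} {c : Fin n → Fin m} {i : Fin n}

lemma withUnitPeaks_of_mem (h : i ∈ S) : withUnitPeaks v S c i = peakVal (c i) 1 0 :=
  if_pos h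

lemma withUnitPeaks_of_notMem (h : i ∉ S) : withUnitPeaks v S c i = v i :=
  if_neg h

lemma isUnitSum_withUnitPeaks (hv : ∀ k, IsUnitSum (v k)) (k : Fin n) :
    IsUnitSum (withUnitPeaks v S c k) := by
  by_cases hk : k ∈ S
  · rw [withUnitPeaks_of_mem hk]
    exact isUnitSum_peakVal zero_le_one le_rfl (by ring)
  · rw [withUnitPeaks_of_notMem hk]
    exact hv k

lemma IsMNash.withUnitPeaks {s : Fin n → Fin m → ℝ} (hs : IsMNash p v s)
    (hrow : ∀ u : Fin n → Fin m → ℝ, (∀ k, IsUnitSum (u k)) → ∀ k, ∑ ℓ, p u k ℓ = 1)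
    {a b : ℝ} (hab : b < a) (hv : ∀ k ∈ S, v k = peakVal (c k) a b) :
    IsMNash p (withUnitPeaks v S c) s := by
  refine ⟨hs.1, fun k w hw => ?_⟩
  have hdev := hrow _ (isUnitSum_update (i := k) hs.1 hw) k
  have hstay := hrow s hs.1 k
  by_cases hk : k ∈ S
  · rw [Mpayoff_le_Mpayoff_iff_of_peakVal one_pos hdev hstay (withUnitPeaks_of_mem hk)]
    exact (Mpayoff_le_Mpayoff_iff_of_peakVal hab hdev hstay (hv k hk)).1 (hs.2 k w hw)
  · rw [Mpayoff_congr (withUnitPeaks_of_notMem hk), Mpayoff_congr (withUnitPeaks_of_notMem hk)]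
    exact hs.2 k w hw

lemma sum_Mpayoff_withUnitPeaks_le {s : Fin n → Fin m → ℝ} {a : ℝ} (ha : 0 ≤ a)
    (hp : ∀ k ℓ, 0 ≤ p s k ℓ) (hrow : ∀ k, ∑ ℓ, p s k ℓ = 1) (hv : ∀ k ℓ, v k ℓ ≤ a) :
    ∑ k, Mpayoff p (withUnitPeaks v S c) s k ≤ ∑ k ∈ S, p s k (c k) + n * a := by
  rw [← sum_add_sum_compl S]
  gcongr with k hk k hk
  · rw [Mpayoff_of_peakVal (hrow k) (withUnitPeaks_of_mem hk)]
    simp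
  · calc ∑ k ∈ Sᶜ, Mpayoff p (withUnitPeaks v S c) s k ≤ ∑ _k ∈ Sᶜ, a := by
          refine sum_le_sum fun k hk => Mpayoff_le_of_le (hp k) (hrow k) fun ℓ => ?_
          rw [withUnitPeaks_of_notMem (mem_compl.1 hk)]
          exact hv k ℓ
      _ ≤ n * a := by
          rw [sum_const, nsmul_eq_mul]
          gcongr
          exact_mod_cast (card_le_univ _).trans_eq (Fintype.card_fin n)

end Mechanism

lemma sum_comp_le_sum_of_injective {ι κ M : Type*} [Fintype ι] [Fintype κ] [AddCommMonoid M]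
    [PartialOrder M] [IsOrderedAddMonoid M] {e : κ → ι} (he : Function.Injective e) {f : ι → M}
    (hf : ∀ i, 0 ≤ f i) : ∑ k, f (e k) ≤ ∑ i, f i := by
  classical
  rw [← sum_image fun x _ y _ h => he h]
  exact sum_le_sum_of_subset_of_nonneg (subset_univ _) fun i _ _ => hf i

lemma exists_le_inv_card {κ : Type*} [Fintype κ] [Nonempty κ] (f : κ → ℝ) (hf : ∑ k, f k ≤ 1) :
    ∃ k, f k ≤ 1 / Fintype.card κ := by
  have hsum : ∑ _k : κ, (1 / Fintype.card κ : ℝ) = 1 := by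
    simp [card_univ, Fintype.card_ne_zero]
  obtain ⟨k, -, hk⟩ := exists_le_of_sum_le univ_nonempty (hf.trans hsum.ge)
  exact ⟨k, hk⟩

lemma sum_le_sum_ciSup {α ι κ : Type*} [Finite α] [Fintype ι] [Fintype κ] {w : α → ι → ℝ}
    (hw : ∀ i ℓ, 0 ≤ w i ℓ) {e : κ → ι} (he : Function.Injective e) (f : κ → α) :
    ∑ k, w (f k) (e k) ≤ ∑ ℓ, ⨆ i, w i ℓ :=
  calc ∑ k, w (f k) (e k) ≤ ∑ k, ⨆ i, w i (e k) :=
        sum_le_sum fun k _ => le_ciSup (f := fun i => w i (e k)) (Set.finite_range _).bddAbove (f k)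
    _ ≤ ∑ ℓ, ⨆ i, w i ℓ := sum_comp_le_sum_of_injective he fun ℓ => Real.iSup_nonneg (hw · ℓ)

lemma block_values_admissible {x ε : ℝ} (hx : 2 ≤ x) (hε0 : 0 < ε) (hε1 : ε ≤ 1 / x ^ 3) :
    0 ≤ 1 / x - ε / (x - 1) ∧ 1 / x - ε / (x - 1) < 1 / x + ε ∧
      (1 / x + ε) + (x - 1) * (1 / x - ε / (x - 1)) = 1 ∧ x * (1 / x + ε) ≤ 2 := by
  have hx1 : 0 < x - 1 := by linarith
  have hxε : x * ε ≤ 1 :=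
    calc x * ε ≤ x ^ 3 * ε := by gcongr; exact le_self_pow₀ (by linarith) (by norm_num)
      _ ≤ 1 := by rwa [← le_div_iff₀' (by positivity)]
  refine ⟨?_, ?_, by field_simp; ring, ?_⟩
  · rw [sub_nonneg, div_le_div_iff₀ hx1 (by linarith)]
    linarith
  · linarith [div_pos hε0 hx1]
  · rw [mul_add, mul_one_div_cancel (by positivity)]
    linarith

section Blocks

variable {r : ℕ}

def block (i : Fin (r ^ 2)) : Fin r :=
  ⟨i / r, Nat.div_lt_of_lt_mul (by simpa [sq] using i.isLt)⟩

def blockItem (j : Fin r) : Fin (r ^ 2) :=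
  Fin.castLE (Nat.le_self_pow (by norm_num) r) j

lemma blockItem_injective : Function.Injective (blockItem (r := r)) :=
  Fin.castLE_injective (Nat.le_self_pow (by norm_num) r)

def blockAgent (j k : Fin r) : Fin (r ^ 2) :=
  ⟨r * j + k, by nlinarith [j.isLt, k.isLt]⟩

lemma block_blockAgent (j k : Fin r) : block (blockAgent j k) = j := by
  ext
  simp [block, blockAgent, Nat.mul_add_div k.pos, Nat.div_eq_of_lt k.isLt]

lemma blockAgent_injective (j : Fin r) : Function.Injective (blockAgent j) := by
  intro k k' h
  ext
  simpa [blockAgent] using congrArg Fin.val h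

lemma exists_block_le {q : Fin (r ^ 2) → ℝ} (hq0 : ∀ i, 0 ≤ q i) (hq : ∑ i, q i ≤ 1) (j : Fin r) :
    ∃ i, block i = j ∧ q i ≤ 1 / r := by
  have : Nonempty (Fin r) := ⟨j⟩
  obtain ⟨k, hk⟩ := exists_le_inv_card (fun k => q (blockAgent j k))
    ((sum_comp_le_sum_of_injective (blockAgent_injective j) hq0).trans hq)
  exact ⟨blockAgent j k, block_blockAgent j k, by simpa using hk⟩

lemma exists_blockwise_pick {q : Fin (r ^ 2) → Fin (r ^ 2) → ℝ} (hq0 : ∀ i ℓ, 0 ≤ q i ℓ)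
    (hq : ∀ ℓ, ∑ i, q i ℓ = 1) :
    ∃ pick : Fin r → Fin (r ^ 2),
      (∀ j, block (pick j) = j) ∧ ∑ j, q (pick j) (blockItem j) ≤ 1 := by
  choose pick hpick hle using fun j => exists_block_le (hq0 · (blockItem j)) (hq _).le j
  refine ⟨pick, hpick, ?_⟩
  calc ∑ j, q (pick j) (blockItem j) ≤ ∑ _j : Fin r, 1 / (r : ℝ) := sum_le_sum fun j _ => hle j
    _ ≤ 1 := by
      rw [sum_const, card_univ, Fintype.card_fin, nsmul_eq_mul, mul_one_div]
      exact div_self_le_one _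

-- The profile `v̄` of the statement, with `i_j = pick j`.
def blockPeaks (v : Fin (r ^ 2) → Fin (r ^ 2) → ℝ) (pick : Fin r → Fin (r ^ 2)) :
    Fin (r ^ 2) → Fin (r ^ 2) → ℝ :=
  withUnitPeaks v (univ.image pick) fun i => blockItem (block i)

variable {v : Fin (r ^ 2) → Fin (r ^ 2) → ℝ} {pick : Fin r → Fin (r ^ 2)}

lemma blockPeaks_apply_pick (hpick : ∀ j, block (pick j) = j) (j : Fin r) (ℓ : Fin (r ^ 2)) :
    blockPeaks v pick (pick j) ℓ = if (ℓ : ℕ) = j then 1 else 0 := by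
  rw [blockPeaks, withUnitPeaks_of_mem (mem_image_of_mem pick (mem_univ j)), hpick]
  simp [peakVal, blockItem, Fin.ext_iff]

lemma blockPeaks_of_ne {i : Fin (r ^ 2)} (hi : ∀ j, i ≠ pick j) : blockPeaks v pick i = v i :=
  withUnitPeaks_of_notMem (by simpa using fun j => (hi j).symm)

lemma le_sum_ciSup_blockPeaks (hv : ∀ i, IsUnitSum (v i)) (hpick : ∀ j, block (pick j) = j) :
    (r : ℝ) ≤ ∑ ℓ, ⨆ i, blockPeaks v pick i ℓ :=
  calc (r : ℝ) = ∑ j, blockPeaks v pick (pick j) (blockItem j) := by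
        simp [blockPeaks_apply_pick hpick, blockItem]
    _ ≤ _ := sum_le_sum_ciSup (fun i => (isUnitSum_withUnitPeaks hv i).1) blockItem_injective pick

lemma sum_Mpayoff_blockPeaks_le
    {p : (Fin (r ^ 2) → Fin (r ^ 2) → ℝ) → Fin (r ^ 2) → Fin (r ^ 2) → ℝ} {s : Fin (r ^ 2) → Fin (r ^ 2) → ℝ} {a : ℝ} (hpick : ∀ j, block (pick j) = j) (ha : 0 ≤ a)
    (hp : ∀ k ℓ, 0 ≤ p s k ℓ) (hrow : ∀ k, ∑ ℓ, p s k ℓ = 1) (hv : ∀ k ℓ, v k ℓ ≤ a) :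
    ∑ i, Mpayoff p (blockPeaks v pick) s i ≤ ∑ j, p s (pick j) (blockItem j) + (r ^ 2 : ℕ) * a := by
  have hinj : Function.Injective pick := Function.LeftInverse.injective hpick
  calc ∑ i, Mpayoff p (blockPeaks v pick) s i
      ≤ ∑ i ∈ univ.image pick, p s i (blockItem (block i)) + (r ^ 2 : ℕ) * a :=
        sum_Mpayoff_withUnitPeaks_le ha hp hrow hv
    _ = ∑ j, p s (pick j) (blockItem j) + (r ^ 2 : ℕ) * a := by
        rw [sum_image fun x _ y _ h => hinj h]
        simp only [hpick]

end Blocks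

/-- **The pure price of anarchy of any unit-sum fair mechanism is `Ω(√n)`.**
With `n = r²` agents and items (`r ≥ 2`), `ε ∈ (0, 1/n³]`, and the block valuations `v`
(agent `i` values the item indexed by its block `⌊i/r⌋` at `1/n + ε` and every other item
at `1/n − ε/(n−1)`), every pure Nash equilibrium `s` of a fair mechanism `p` with respect
to `v` is also a pure Nash equilibrium with respect to a profile `v̄` — agreeing with `v`
except that for each block `j` one agent `pick j` of block `j` values item `j` at `1` and
everything else at `0` — whose optimal welfare is at least `√n = r` but under which `s`
has social welfare at most `3`. -/
theorem fair_mechanism_poa_lower (r : ℕ) (hr : 2 ≤ r)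
    (ε : ℝ) (hε0 : 0 < ε) (hε1 : ε ≤ 1 / ((r : ℝ) ^ 2) ^ 3)
    (p : (Fin (r ^ 2) → Fin (r ^ 2) → ℝ) → Fin (r ^ 2) → Fin (r ^ 2) → ℝ)
    (hmech : IsMechanism (r ^ 2) (r ^ 2) p) (hfair : IsFair (r ^ 2) (r ^ 2) p)
    (v : Fin (r ^ 2) → Fin (r ^ 2) → ℝ)
    (hv : ∀ i j, v i j =
      if (j : ℕ) = (i : ℕ) / r then 1 / (r : ℝ) ^ 2 + ε
      else 1 / (r : ℝ) ^ 2 - ε / ((r : ℝ) ^ 2 - 1))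
    (s : Fin (r ^ 2) → Fin (r ^ 2) → ℝ)
    (hNE : IsMNash p v s) :
    ∃ (vb : Fin (r ^ 2) → Fin (r ^ 2) → ℝ) (pick : Fin r → Fin (r ^ 2)),
      (∀ i, IsUnitSum (vb i)) ∧
      (∀ j : Fin r, ((pick j : ℕ)) / r = (j : ℕ)) ∧
      (∀ (j : Fin r) (ℓ : Fin (r ^ 2)),
        vb (pick j) ℓ = if (ℓ : ℕ) = (j : ℕ) then 1 else 0) ∧
      (∀ i, (∀ j, i ≠ pick j) → vb i = v i) ∧
      IsMNash p vb s ∧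
      (r : ℝ) ≤ (∑ j, ⨆ i, vb i j) ∧
      ∑ i, Mpayoff p vb s i ≤ 3 := by
  have hN : (2 : ℝ) ≤ (r : ℝ) ^ 2 := by
    have : (2 : ℝ) ≤ r := by exact_mod_cast hr
    nlinarith
  obtain ⟨hb, hab, hsum, hNa⟩ := block_values_admissible hN hε0 hε1
  have hvpeak : ∀ i, v i = peakVal (blockItem (block i))
      (1 / (r : ℝ) ^ 2 + ε) (1 / (r : ℝ) ^ 2 - ε / ((r : ℝ) ^ 2 - 1)) :=
    fun i => funext fun ℓ => by simp [hv, peakVal, block, blockItem, Fin.ext_iff]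
  have hvunit : ∀ i, IsUnitSum (v i) := fun i =>
    hvpeak i ▸ isUnitSum_peakVal (by positivity) hb (by push_cast; exact hsum)
  have hrow := fun u hu => hfair.sum_eq_one (pow_ne_zero 2 (by omega)) (u := u) hu
  obtain ⟨hp0, hcol⟩ := hmech s hNE.1
  obtain ⟨pick, hpick, hpick_le⟩ := exists_blockwise_pick hp0 hcol
  refine ⟨blockPeaks v pick, pick, isUnitSum_withUnitPeaks hvunit,
    fun j => congrArg Fin.val (hpick j), blockPeaks_apply_pick hpick, fun i => blockPeaks_of_ne,
    hNE.withUnitPeaks hrow hab fun i _ => hvpeak i, le_sum_ciSup_blockPeaks hvunit hpick, ?_⟩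
  calc ∑ i, Mpayoff p (blockPeaks v pick) s i
      ≤ ∑ j, p s (pick j) (blockItem j) + (r ^ 2 : ℕ) * (1 / (r : ℝ) ^ 2 + ε) :=
        sum_Mpayoff_blockPeaks_le hpick (by positivity) hp0 (hrow s hNE.1)
          fun i ℓ => hvpeak i ▸ peakVal_le hab.le
    _ ≤ 1 + 2 := add_le_add hpick_le (by push_cast; exact hNa)
    _ = 3 := by norm_num
end
end

section
/- (Late items can be won outright under Probabilistic Serial.) Let v′ be unit-sum true valuations and let σ be a profile of reported orders that is a pure Nash equilibrium of Probabilistic Serial with respect to v′. Let i be any agent, let q ≥ 2 be a real number, and let X = {x_1, …, x_k} be a set of k distinct items with k ≤ ⌊q⌋ − 1 whose consumption times under σ are all at least q. Then agent i's equilibrium payoff is at least ∑_{ℓ=1}^k v′_i(x_ℓ). -/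
/-!
Agent `i` deviates to an order ranking the items of `X` first. If no other agent touches `X`,
`i` then eats the items of `X` one after another at unit speed and owns all of them by time
`#X ≤ q - 1`, so the Nash condition gives the bound. No other agent does touch `X`: in the
equilibrium run `E` an agent eating some `x ∈ X` at a time `t < q - 1` would keep eating it and
finish it before `q`; and, phase by phase, `E` is ahead of the deviated run on every item outside
`X`, so whatever another agent eats in the deviated run it also eats in `E`.
-/

open MeasureTheory

noncomputable section

/-- A Probabilistic Serial (PS) execution for the profile of reported orders `σ`:
agent `i` prefers item `j` to item `ℓ` iff `σ i j ≤ σ i ℓ` (smaller rank = better). -/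
structure PSExec (n m : ℕ) (σ : Fin n → Equiv.Perm (Fin m)) where
  q : Fin m → ℝ → ℝ
  c : Fin n → Fin m → ℝ → ℝ
  q_mem : ∀ j t, t ∈ Set.Icc (0 : ℝ) ((m : ℝ) / (n : ℝ)) → q j t ∈ Set.Icc (0 : ℝ) 1
  c_nonneg : ∀ i j t, 0 ≤ c i j t
  c_integrable : ∀ i j, IntervalIntegrable (c i j) volume 0 ((m : ℝ) / (n : ℝ))
  q_eq : ∀ j t, t ∈ Set.Icc (0 : ℝ) ((m : ℝ) / (n : ℝ)) →
    q j t = 1 - ∫ s in (0 : ℝ)..t, ∑ i, c i j s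
  c_one : ∀ i j t, t ∈ Set.Icc (0 : ℝ) ((m : ℝ) / (n : ℝ)) → 0 < q j t →
    (∀ ℓ, 0 < q ℓ t → σ i j ≤ σ i ℓ) → c i j t = 1
  c_zero : ∀ i j t, t ∈ Set.Icc (0 : ℝ) ((m : ℝ) / (n : ℝ)) →
    ¬ (0 < q j t ∧ ∀ ℓ, 0 < q ℓ t → σ i j ≤ σ i ℓ) → c i j t = 0

/-- The consumption time of item `j` in a PS execution. -/
def PSExec.consTime {n m : ℕ} {σ : Fin n → Equiv.Perm (Fin m)} (E : PSExec n m σ)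
    (j : Fin m) : ℝ :=
  sInf {t : ℝ | t ∈ Set.Icc (0 : ℝ) ((m : ℝ) / (n : ℝ)) ∧ E.q j t = 0}

/-- Agent `i`'s (expected) PS payoff under true valuations `v'`. -/
def PSExec.payoff {n m : ℕ} {σ : Fin n → Equiv.Perm (Fin m)} (E : PSExec n m σ)
    (v' : Fin n → Fin m → ℝ) (i : Fin n) : ℝ :=
  ∑ j, v' i j * ∫ s in (0 : ℝ)..((m : ℝ) / (n : ℝ)), E.c i j s

/-- The profile of orders `σ`, with the execution `E`, is a pure Nash equilibrium of PS
with respect to `v'`: no agent can strictly increase its payoff by reporting a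
different order. -/
def IsPSNash {n m : ℕ} (v' : Fin n → Fin m → ℝ) (σ : Fin n → Equiv.Perm (Fin m))
    (E : PSExec n m σ) : Prop :=
  ∀ (i : Fin n) (τ : Equiv.Perm (Fin m))
    (E' : PSExec n m (Function.update σ i τ)), E'.payoff v' i ≤ E.payoff v' i

open Finset

lemma exists_perm_val_lt_card_iff_mem {m : ℕ} (X : Finset (Fin m)) :
    ∃ τ : Equiv.Perm (Fin m), ∀ j, ((τ j : ℕ) < #X ↔ j ∈ X) := by
  classical
  have hcard : Fintype.card {j // j ∈ X} = Fintype.card {j : Fin m // (j : ℕ) < #X} := by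
    rw [Fintype.card_coe, Fintype.card_subtype, Fin.card_filter_val_lt,
      min_eq_right (card_le_univ X |>.trans_eq (Fintype.card_fin m))]
  let e := Fintype.equivOfCardEq hcard
  refine ⟨e.extendSubtype, fun j => ⟨fun h => ?_, e.extendSubtype_mem j⟩⟩
  by_contra hj
  exact e.extendSubtype_not_mem j hj h

namespace PS

open scoped Classical

variable {n m : ℕ}

section Run

/-! A PS run built phase by phase: during a phase every agent eats its favourite remaining item,
and the phase ends when one of the items being eaten runs out. `stock π p` and `phaseStart π p`
are the remaining quantities and the time at the start of phase `p`. -/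

variable (π : Fin n → Equiv.Perm (Fin m))

def Eats (r : Fin m → ℝ) (h : Fin n) (j : Fin m) : Prop :=
  0 < r j ∧ ∀ ℓ, 0 < r ℓ → π h j ≤ π h ℓ

def rate (r : Fin m → ℝ) (j : Fin m) : ℕ := #{h | Eats π r h j}

def activeItems (r : Fin m → ℝ) : Finset (Fin m) := {j | 0 < rate π r j}

def phaseLength (r : Fin m → ℝ) : ℝ :=
  if H : (activeItems π r).Nonempty then (activeItems π r).inf' H (fun j => r j / rate π r j)
  else 0

def step (r : Fin m → ℝ) (j : Fin m) : ℝ := r j - phaseLength π r * rate π r j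

def stock (p : ℕ) : Fin m → ℝ := (step π)^[p] fun _ => 1

def phaseStart (p : ℕ) : ℝ := ∑ p' ∈ range p, phaseLength π (stock π p')

end Run

variable {π : Fin n → Equiv.Perm (Fin m)} {r : Fin m → ℝ} {h : Fin n} {j : Fin m}

lemma rate_pos_iff : 0 < rate π r j ↔ ∃ h, Eats π r h j := by
  simp [rate, card_pos, filter_nonempty_iff]

lemma pos_of_rate_pos (hj : 0 < rate π r j) : 0 < r j := by
  obtain ⟨_, he⟩ := rate_pos_iff.1 hj
  exact he.1

lemma exists_eats (hav : ∃ j, 0 < r j) (h : Fin n) : ∃ j, Eats π r h j := by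
  obtain ⟨j₀, hj₀⟩ := hav
  obtain ⟨b, hb, hbmin⟩ := exists_min_image {j | 0 < r j} (fun j => π h j) ⟨j₀, by simp [hj₀]⟩
  exact ⟨b, (mem_filter.1 hb).2, fun ℓ hℓ => hbmin ℓ (by simp [hℓ])⟩

lemma Eats.eq {j' : Fin m} (h₁ : Eats π r h j) (h₂ : Eats π r h j') : j = j' :=
  (π h).injective (le_antisymm (h₁.2 _ h₂.1) (h₂.2 _ h₁.1))

lemma phaseLength_nonneg (hr : ∀ j, 0 ≤ r j) : 0 ≤ phaseLength π r := by
  unfold phaseLength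
  split_ifs with H
  · exact le_inf' H _ fun j _ => div_nonneg (hr j) (Nat.cast_nonneg _)
  · exact le_rfl

lemma phaseLength_eq_of_nonempty (H : (activeItems π r).Nonempty) :
    phaseLength π r = (activeItems π r).inf' H (fun j => r j / rate π r j) :=
  dif_pos H

lemma phaseLength_mul_rate_le (hr : ∀ j, 0 ≤ r j) (j : Fin m) :
    phaseLength π r * rate π r j ≤ r j := by
  rcases Nat.eq_zero_or_pos (rate π r j) with h0 | hpos
  · simp [h0, hr j]
  · have hj : j ∈ activeItems π r := by simp [activeItems, hpos]
    have hle : phaseLength π r ≤ r j / rate π r j := by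
      rw [phaseLength_eq_of_nonempty ⟨j, hj⟩]
      exact inf'_le _ hj
    have hc : (0 : ℝ) < rate π r j := by exact_mod_cast hpos
    calc phaseLength π r * rate π r j ≤ r j / rate π r j * rate π r j := by gcongr
      _ = r j := div_mul_cancel₀ _ hc.ne'

lemma step_nonneg (hr : ∀ j, 0 ≤ r j) (j : Fin m) : 0 ≤ step π r j :=
  sub_nonneg.2 (phaseLength_mul_rate_le hr j)

lemma step_le (hr : ∀ j, 0 ≤ r j) (j : Fin m) : step π r j ≤ r j :=
  sub_le_self _ (mul_nonneg (phaseLength_nonneg hr) (Nat.cast_nonneg _))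

lemma step_eq_self_of_rate_eq_zero (hj : rate π r j = 0) : step π r j = r j := by
  simp [step, hj]

lemma rate_eq_zero_of_not_exists_pos (hav : ¬ ∃ j, 0 < r j) (j : Fin m) : rate π r j = 0 :=
  Nat.eq_zero_of_not_pos fun hj => hav ⟨j, pos_of_rate_pos hj⟩

lemma phaseLength_eq_zero_of_not_exists_pos (hav : ¬ ∃ j, 0 < r j) : phaseLength π r = 0 := by
  refine dif_neg ?_
  rintro ⟨j, hj⟩
  exact hav ⟨j, pos_of_rate_pos (mem_filter.1 hj).2⟩

/-- The item attaining the minimum in `phaseLength` runs out during the phase. -/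
lemma exists_pos_step_eq_zero (hn : 0 < n) (hav : ∃ j, 0 < r j) :
    ∃ j, 0 < r j ∧ step π r j = 0 := by
  obtain ⟨b, hb⟩ := exists_eats (π := π) hav ⟨0, hn⟩
  have H : (activeItems π r).Nonempty := ⟨b, by simpa [activeItems] using rate_pos_iff.2 ⟨_, hb⟩⟩
  obtain ⟨j, hj, hjeq⟩ := exists_mem_eq_inf' H fun j => r j / rate π r j
  have hrate : (rate π r j : ℝ) ≠ 0 := by exact_mod_cast (mem_filter.1 hj).2.ne'
  refine ⟨j, pos_of_rate_pos (mem_filter.1 hj).2, ?_⟩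
  rw [step, phaseLength_eq_of_nonempty H, hjeq, div_mul_cancel₀ _ hrate, sub_self]

lemma sum_rate (hav : ∃ j, 0 < r j) : ∑ j, rate π r j = n := by
  choose f hf using exists_eats (π := π) hav
  have hfiber (j : Fin m) : rate π r j = #{h | f h = j} := by
    refine congrArg card (filter_congr fun h _ => ?_)
    exact ⟨fun he => (hf h).eq he, fun hj => hj ▸ hf h⟩
  simp only [hfiber]
  simpa using (card_eq_sum_card_fiberwise (f := f) (s := univ) (t := univ)
    fun h _ => mem_univ _).symm

lemma sum_step (hav : ∃ j, 0 < r j) : ∑ j, step π r j = ∑ j, r j - phaseLength π r * n := by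
  simp only [step, sum_sub_distrib, ← mul_sum, ← Nat.cast_sum, sum_rate hav]

lemma stock_zero : stock π 0 = fun _ => 1 := rfl

lemma stock_succ (p : ℕ) : stock π (p + 1) = step π (stock π p) :=
  Function.iterate_succ_apply' _ _ _

lemma phaseStart_zero : phaseStart π 0 = 0 := by simp [phaseStart]

lemma phaseStart_succ (p : ℕ) :
    phaseStart π (p + 1) = phaseStart π p + phaseLength π (stock π p) := by
  simp [phaseStart, sum_range_succ]

lemma stock_nonneg (p : ℕ) (j : Fin m) : 0 ≤ stock π p j := by
  induction p generalizing j with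
  | zero => simp [stock_zero]
  | succ p ih => rw [stock_succ]; exact step_nonneg ih j

lemma stock_antitone (j : Fin m) : Antitone fun p => stock π p j :=
  antitone_nat_of_succ_le fun p => by rw [stock_succ]; exact step_le (stock_nonneg p) j

lemma stock_le_one (p : ℕ) (j : Fin m) : stock π p j ≤ 1 :=
  stock_antitone j (Nat.zero_le p)

lemma phaseLength_stock_nonneg (p : ℕ) : 0 ≤ phaseLength π (stock π p) :=
  phaseLength_nonneg (stock_nonneg p)

lemma phaseStart_nonneg (p : ℕ) : 0 ≤ phaseStart π p :=
  sum_nonneg fun p _ => phaseLength_stock_nonneg p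

lemma phaseStart_mono : Monotone (phaseStart π) :=
  monotone_nat_of_le_succ fun p => by
    rw [phaseStart_succ]; exact le_add_of_nonneg_right (phaseLength_stock_nonneg p)

lemma sum_stock (p : ℕ) : ∑ j, stock π p j = m - n * phaseStart π p := by
  induction p with
  | zero => simp [stock_zero, phaseStart_zero]
  | succ p ih =>
    by_cases hav : ∃ j, 0 < stock π p j
    · rw [stock_succ, sum_step hav, ih, phaseStart_succ]; ring
    · simpa [stock_succ, step, rate_eq_zero_of_not_exists_pos hav, phaseStart_succ,
        phaseLength_eq_zero_of_not_exists_pos hav] using ih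

lemma card_pos_stock_le (hn : 0 < n) (p : ℕ) :
    #({j | 0 < stock π p j} : Finset (Fin m)) ≤ m - p := by
  induction p with
  | zero => simpa using card_filter_le (univ : Finset (Fin m)) _
  | succ p ih =>
    have hsub : ({j | 0 < stock π (p + 1) j} : Finset (Fin m)) ⊆
        ({j | 0 < stock π p j} : Finset (Fin m)) := by
      intro ℓ hℓ
      simp only [mem_filter, mem_univ, true_and] at hℓ ⊢
      exact hℓ.trans_le (stock_antitone ℓ p.le_succ)
    by_cases hav : ∃ j, 0 < stock π p j
    · obtain ⟨j, hj, hj0⟩ := exists_pos_step_eq_zero (π := π) hn hav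
      have hss := (ssubset_iff_of_subset hsub).2 ⟨j, by simp [hj], by simp [stock_succ, hj0]⟩
      have := card_lt_card hss
      omega
    · have hz : #({j | 0 < stock π p j} : Finset (Fin m)) = 0 := by simpa using hav
      have := card_le_card hsub
      omega

lemma stock_eq_zero (hn : 0 < n) (j : Fin m) : stock π m j = 0 := by
  have h := card_pos_stock_le (π := π) hn m
  simp only [Nat.sub_self, Nat.le_zero, card_eq_zero, filter_eq_empty_iff] at h
  exact le_antisymm (not_lt.1 (h (mem_univ j))) (stock_nonneg m j)

lemma phaseStart_eq_div (hn : 0 < n) : phaseStart π m = (m : ℝ) / n := by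
  have h := sum_stock (π := π) m
  simp only [stock_eq_zero hn, sum_const_zero] at h
  have hn' : (n : ℝ) ≠ 0 := by exact_mod_cast hn.ne'
  field_simp
  linarith

variable {p : ℕ} {t : ℝ}

variable (π) in
def consRate (h : Fin n) (j : Fin m) (t : ℝ) : ℝ :=
  ∑ p ∈ range m, (Set.Ico (phaseStart π p) (phaseStart π (p + 1))).indicator
    (fun _ => if Eats π (stock π p) h j then 1 else 0) t

variable (π) in
def remaining (j : Fin m) (t : ℝ) : ℝ := 1 - ∫ s in 0..t, ∑ h, consRate π h j s

lemma consRate_nonneg (h : Fin n) (j : Fin m) (t : ℝ) : 0 ≤ consRate π h j t :=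
  sum_nonneg fun _ _ => Set.indicator_nonneg (fun _ _ => by split_ifs <;> norm_num) _

lemma consRate_of_mem_phase (hp : p < m)
    (ht : t ∈ Set.Ico (phaseStart π p) (phaseStart π (p + 1))) (h : Fin n) (j : Fin m) :
    consRate π h j t = if Eats π (stock π p) h j then 1 else 0 := by
  rw [consRate, sum_eq_single_of_mem p (mem_range.2 hp), Set.indicator_of_mem ht]
  intro p' _ hne
  refine Set.indicator_of_notMem (fun ht' => ?_) _
  rcases Nat.lt_or_gt_of_ne hne with hlt | hgt
  · exact (ht'.2.trans_le ((phaseStart_mono hlt).trans ht.1)).false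
  · exact (ht.2.trans_le ((phaseStart_mono hgt).trans ht'.1)).false

lemma consRate_eq_zero_of_le (ht : phaseStart π m ≤ t) (h : Fin n) (j : Fin m) :
    consRate π h j t = 0 :=
  sum_eq_zero fun _ hp => Set.indicator_of_notMem
    (fun ht' => (ht'.2.trans_le ((phaseStart_mono (mem_range.1 hp)).trans ht)).false) _

lemma consRate_eq_zero_of_forall_not_eats (hj : ∀ p, ¬ Eats π (stock π p) h j) (t : ℝ) :
    consRate π h j t = 0 :=
  sum_eq_zero fun p _ => by simp [hj p]

lemma intervalIntegrable_consRate (h : Fin n) (j : Fin m) (a b : ℝ) :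
    IntervalIntegrable (consRate π h j) volume a b := by
  have hsum : consRate π h j = ∑ p ∈ range m,
      (Set.Ico (phaseStart π p) (phaseStart π (p + 1))).indicator
        (fun _ => if Eats π (stock π p) h j then (1 : ℝ) else 0) := by
    ext t; simp [consRate]
  rw [hsum]
  exact IntervalIntegrable.sum _ fun p _ =>
    ((integrableOn_const measure_Ico_lt_top.ne).integrable_indicator measurableSet_Ico).intervalIntegrable

lemma intervalIntegrable_sum_consRate (j : Fin m) (a b : ℝ) :
    IntervalIntegrable (fun s => ∑ h, consRate π h j s) volume a b := by
  simpa only [← Finset.sum_apply] using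
    IntervalIntegrable.sum univ fun h _ => intervalIntegrable_consRate (π := π) h j a b

lemma sum_consRate_of_mem_phase (hp : p < m)
    (ht : t ∈ Set.Ico (phaseStart π p) (phaseStart π (p + 1))) (j : Fin m) :
    ∑ h, consRate π h j t = rate π (stock π p) j := by
  simp [consRate_of_mem_phase hp ht, rate]

lemma integral_sum_consRate_phase (hp : p < m)
    (ht : t ∈ Set.Icc (phaseStart π p) (phaseStart π (p + 1))) (j : Fin m) :
    ∫ s in phaseStart π p..t, ∑ h, consRate π h j s = (t - phaseStart π p) * rate π (stock π p) j := by
  rw [intervalIntegral.integral_congr_ae (g := fun _ => (rate π (stock π p) j : ℝ)),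
    intervalIntegral.integral_const, smul_eq_mul]
  filter_upwards [Measure.ae_ne volume (phaseStart π (p + 1))] with s hs hmem
  rw [Set.uIoc_of_le ht.1] at hmem
  exact sum_consRate_of_mem_phase hp ⟨hmem.1.le, lt_of_le_of_ne (hmem.2.trans ht.2) hs⟩ j

lemma remaining_eq_sub_integral (j : Fin m) (a b : ℝ) :
    remaining π j b = remaining π j a - ∫ s in a..b, ∑ h, consRate π h j s := by
  rw [remaining, remaining, ← intervalIntegral.integral_add_adjacent_intervals
    (intervalIntegrable_sum_consRate j 0 a) (intervalIntegrable_sum_consRate j a b)]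
  ring

lemma remaining_phaseStart (hp : p ≤ m) (j : Fin m) :
    remaining π j (phaseStart π p) = stock π p j := by
  induction p with
  | zero => simp [remaining, phaseStart_zero, stock_zero]
  | succ p ih =>
    rw [remaining_eq_sub_integral j (phaseStart π p), ih (by omega),
      integral_sum_consRate_phase (by omega) ⟨phaseStart_mono p.le_succ, le_rfl⟩,
      phaseStart_succ, stock_succ, step]
    ring

lemma remaining_of_mem_phase (hp : p < m)
    (ht : t ∈ Set.Icc (phaseStart π p) (phaseStart π (p + 1))) (j : Fin m) :
    remaining π j t = stock π p j - (t - phaseStart π p) * rate π (stock π p) j := by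
  rw [remaining_eq_sub_integral j (phaseStart π p), remaining_phaseStart hp.le,
    integral_sum_consRate_phase hp ht]

lemma remaining_mem_Icc_of_mem_phase (hp : p < m)
    (ht : t ∈ Set.Icc (phaseStart π p) (phaseStart π (p + 1))) (j : Fin m) :
    remaining π j t ∈ Set.Icc 0 1 := by
  rw [remaining_of_mem_phase hp ht]
  have hlen : t - phaseStart π p ≤ phaseLength π (stock π p) := by
    linarith [ht.2, phaseStart_succ (π := π) p]
  have hrate : 0 ≤ (t - phaseStart π p) * rate π (stock π p) j :=
    mul_nonneg (sub_nonneg.2 ht.1) (Nat.cast_nonneg _)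
  constructor
  · nlinarith [phaseLength_mul_rate_le (π := π) (stock_nonneg (π := π) p) j,
      (Nat.cast_nonneg (rate π (stock π p) j) : (0 : ℝ) ≤ _)]
  · linarith [stock_le_one (π := π) p j]

lemma remaining_pos_iff_of_mem_phase (hp : p < m)
    (ht : t ∈ Set.Ico (phaseStart π p) (phaseStart π (p + 1))) (j : Fin m) :
    0 < remaining π j t ↔ 0 < stock π p j := by
  rw [remaining_of_mem_phase hp (Set.Ico_subset_Icc_self ht)]
  have hlen : t - phaseStart π p < phaseLength π (stock π p) := by
    linarith [ht.2, phaseStart_succ (π := π) p]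
  have hle := phaseLength_mul_rate_le (π := π) (stock_nonneg (π := π) p) j
  rcases Nat.eq_zero_or_pos (rate π (stock π p) j) with h0 | hpos
  · simp [h0]
  · have hrate : (0 : ℝ) < rate π (stock π p) j := by exact_mod_cast hpos
    constructor
    · intro h
      nlinarith [sub_nonneg.2 ht.1]
    · intro _
      nlinarith

lemma mem_phase_or_eq_phaseStart (hn : 0 < n) (ht : t ∈ Set.Icc 0 ((m : ℝ) / n)) :
    (∃ p < m, t ∈ Set.Ico (phaseStart π p) (phaseStart π (p + 1))) ∨ t = phaseStart π m := by
  by_contra! H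
  have hle : ∀ p ≤ m, phaseStart π p ≤ t := by
    intro p hp
    induction p with
    | zero => simpa [phaseStart_zero] using ht.1
    | succ p ih => exact not_lt.1 fun hlt => H.1 p (by omega) ⟨ih (by omega), hlt⟩
  exact H.2 (le_antisymm (phaseStart_eq_div (π := π) hn ▸ ht.2) (hle m le_rfl))

variable (π) in
def run (hn : 0 < n) : PSExec n m π where
  q := remaining π
  c := consRate π
  q_mem j t ht := by
    rcases mem_phase_or_eq_phaseStart (π := π) hn ht with ⟨p, hp, htp⟩ | rfl
    · exact remaining_mem_Icc_of_mem_phase hp (Set.Ico_subset_Icc_self htp) j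
    · simp [remaining_phaseStart le_rfl, stock_eq_zero hn]
  c_nonneg := consRate_nonneg
  c_integrable h j := intervalIntegrable_consRate h j _ _
  q_eq _ _ _ := rfl
  c_one h j t ht hpos hbest := by
    rcases mem_phase_or_eq_phaseStart (π := π) hn ht with ⟨p, hp, htp⟩ | rfl
    · rw [consRate_of_mem_phase hp htp, if_pos]
      exact ⟨(remaining_pos_iff_of_mem_phase hp htp j).1 hpos,
        fun ℓ hℓ => hbest ℓ ((remaining_pos_iff_of_mem_phase hp htp ℓ).2 hℓ)⟩
    · simp [remaining_phaseStart le_rfl, stock_eq_zero hn] at hpos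
  c_zero h j t ht hnot := by
    rcases mem_phase_or_eq_phaseStart (π := π) hn ht with ⟨p, hp, htp⟩ | rfl
    · rw [consRate_of_mem_phase hp htp, if_neg]
      exact fun he => hnot ⟨(remaining_pos_iff_of_mem_phase hp htp j).2 he.1,
        fun ℓ hℓ => he.2 ℓ ((remaining_pos_iff_of_mem_phase hp htp ℓ).1 hℓ)⟩
    · exact consRate_eq_zero_of_le le_rfl h j

lemma integral_consRate_eq_one (hn : 0 < n) {i : Fin n}
    (hj : ∀ h ≠ i, ∀ p, ¬ Eats π (stock π p) h j) :
    ∫ s in (0 : ℝ)..((m : ℝ) / n), consRate π i j s = 1 := by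
  have hsum : ∀ s, ∑ h, consRate π h j s = consRate π i j s := fun s =>
    sum_eq_single_of_mem i (mem_univ i) fun h _ hhi =>
      consRate_eq_zero_of_forall_not_eats (hj h hhi) s
  have hend := remaining_phaseStart (π := π) le_rfl j
  rw [stock_eq_zero hn, remaining, phaseStart_eq_div hn] at hend
  simp only [hsum] at hend
  linarith

end PS

namespace PSExec

variable {n m : ℕ} {σ : Fin n → Equiv.Perm (Fin m)} (E : PSExec n m σ) {j : Fin m} {a b : ℝ}

lemma intervalIntegrable_sum_c (j : Fin m) (hab : Set.uIcc a b ⊆ Set.uIcc 0 ((m : ℝ) / n)) :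
    IntervalIntegrable (fun s => ∑ h, E.c h j s) volume a b := by
  simpa only [← Finset.sum_apply] using
    IntervalIntegrable.sum univ fun h _ => (E.c_integrable h j).mono_set hab

lemma q_eq_sub_integral (j : Fin m) (ha : 0 ≤ a) (hab : a ≤ b) (hb : b ≤ (m : ℝ) / n) :
    E.q j b = E.q j a - ∫ s in a..b, ∑ h, E.c h j s := by
  have hsub {c d : ℝ} (hc : 0 ≤ c) (hcd : c ≤ d) (hd : d ≤ (m : ℝ) / n) :
      Set.uIcc c d ⊆ Set.uIcc 0 ((m : ℝ) / n) := by
    rw [Set.uIcc_of_le hcd, Set.uIcc_of_le (hc.trans (hcd.trans hd))]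
    exact Set.Icc_subset_Icc hc hd
  rw [E.q_eq j b ⟨ha.trans hab, hb⟩, E.q_eq j a ⟨ha, hab.trans hb⟩,
    ← intervalIntegral.integral_add_adjacent_intervals
      (E.intervalIntegrable_sum_c j (hsub le_rfl ha (hab.trans hb)))
      (E.intervalIntegrable_sum_c j (hsub ha hab hb))]
  ring

lemma q_le_sub_mul (j : Fin m) (ha : 0 ≤ a) (hab : a ≤ b) (hb : b ≤ (m : ℝ) / n) {C : ℝ}
    (hC : ∀ s ∈ Set.Ico a b, C ≤ ∑ h, E.c h j s) :
    E.q j b ≤ E.q j a - (b - a) * C := by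
  have hint : (b - a) * C ≤ ∫ s in a..b, ∑ h, E.c h j s := by
    have := intervalIntegral.integral_mono_ae_restrict hab (intervalIntegrable_const (c := C))
      (E.intervalIntegrable_sum_c j (by
        rw [Set.uIcc_of_le hab, Set.uIcc_of_le (ha.trans (hab.trans hb))]
        exact Set.Icc_subset_Icc ha hb)) ?_
    · simpa using this
    rw [Filter.EventuallyLE, ae_restrict_iff' measurableSet_Icc]
    filter_upwards [Measure.ae_ne volume b] with s hsb hs
    exact hC s ⟨hs.1, lt_of_le_of_ne hs.2 hsb⟩
  rw [E.q_eq_sub_integral j ha hab hb]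
  linarith

lemma q_le_of_le (j : Fin m) (ha : 0 ≤ a) (hab : a ≤ b) (hb : b ≤ (m : ℝ) / n) :
    E.q j b ≤ E.q j a := by
  simpa using E.q_le_sub_mul j ha hab hb (C := 0) fun s _ =>
    sum_nonneg fun h _ => E.c_nonneg h j s

/-- An agent eating `x` at time `t` keeps eating it while it lasts, so `x` is gone before
`t + 1`. -/
lemma not_eats_of_pos {h : Fin n} {x : Fin m} {t s : ℝ} (ht : 0 ≤ t) (hts : t + 1 < s)
    (hs : s ≤ (m : ℝ) / n) (hpos : 0 < E.q x s) :
    ¬ PS.Eats σ (fun ℓ => E.q ℓ t) h x := by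
  intro he
  have hrate : ∀ s' ∈ Set.Ico t s, 1 ≤ ∑ h', E.c h' x s' := by
    intro s' hs'
    have hs'0 : 0 ≤ s' := ht.trans hs'.1
    have hs'm : s' ≤ (m : ℝ) / n := hs'.2.le.trans hs
    have hone : E.c h x s' = 1 :=
      E.c_one h x s' ⟨hs'0, hs'm⟩ (hpos.trans_le (E.q_le_of_le x hs'0 hs'.2.le hs))
        fun ℓ hℓ => he.2 ℓ (hℓ.trans_le (E.q_le_of_le ℓ ht hs'.1 hs'm))
    exact hone ▸ single_le_sum (fun h' _ => E.c_nonneg h' x s') (mem_univ h)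
  have hdec := E.q_le_sub_mul x ht (by linarith) hs hrate
  have hq1 := (E.q_mem x t ⟨ht, by linarith⟩).2
  linarith

lemma consTime_le {t : ℝ} (ht : t ∈ Set.Icc 0 ((m : ℝ) / n)) (h0 : E.q j t = 0) :
    E.consTime j ≤ t :=
  csInf_le ⟨0, fun _ hs => hs.1.1⟩ ⟨ht, h0⟩

lemma q_pos_of_lt_consTime {t : ℝ} (ht : t ∈ Set.Icc 0 ((m : ℝ) / n)) (hlt : t < E.consTime j) :
    0 < E.q j t :=
  (E.q_mem j t ht).1.lt_of_ne fun h0 => (E.consTime_le ht h0.symm).not_gt hlt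

lemma le_div_of_le_consTime {q : ℝ} (hq : 0 < q) (h : q ≤ E.consTime j) : q ≤ (m : ℝ) / n := by
  by_contra! hlt
  rcases Set.eq_empty_or_nonempty {t | t ∈ Set.Icc 0 ((m : ℝ) / n) ∧ E.q j t = 0} with he | ⟨t, ht⟩
  · rw [consTime, he, Real.sInf_empty] at h
    linarith
  · linarith [E.consTime_le ht.1 ht.2, ht.1.2]

lemma sum_le_payoff {v' : Fin n → Fin m → ℝ} {i : Fin n} {X : Finset (Fin m)}
    (hv : ∀ j, 0 ≤ v' i j) (hX : ∀ j ∈ X, ∫ s in (0 : ℝ)..((m : ℝ) / n), E.c i j s = 1) :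
    ∑ j ∈ X, v' i j ≤ E.payoff v' i := by
  calc ∑ j ∈ X, v' i j = ∑ j ∈ X, v' i j * ∫ s in (0 : ℝ)..((m : ℝ) / n), E.c i j s :=
        sum_congr rfl fun j hj => by rw [hX j hj, mul_one]
    _ ≤ E.payoff v' i :=
        sum_le_sum_of_subset_of_nonneg (subset_univ X) fun j _ _ =>
          mul_nonneg (hv j) (intervalIntegral.integral_nonneg (by positivity)
            fun s _ => E.c_nonneg i j s)

end PSExec

namespace PS

open scoped Classical

/-- What is left at time `t` of the item of rank `a` when an agent eats the items of rank
`0, 1, 2, …` one after the other at unit speed. -/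
def frontStock (a t : ℝ) : ℝ := max 0 (min 1 (a + 1 - t))

section frontStock

variable {a t : ℝ}

lemma frontStock_of_le (h : a + 1 ≤ t) : frontStock a t = 0 :=
  max_eq_left ((min_le_right _ _).trans (by linarith))

lemma frontStock_of_ge (h : t ≤ a) : frontStock a t = 1 := by
  rw [frontStock, min_eq_left (by linarith), max_eq_right zero_le_one]

lemma frontStock_of_mem (h₁ : a ≤ t) (h₂ : t ≤ a + 1) : frontStock a t = a + 1 - t := by
  rw [frontStock, min_eq_right (by linarith), max_eq_right (by linarith)]

lemma lt_of_frontStock_pos (h : 0 < frontStock a t) : t < a + 1 := by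
  by_contra! h'
  exact (frontStock_of_le h' ▸ h).false

end frontStock

variable {n m : ℕ} {σ π : Fin n → Equiv.Perm (Fin m)} {E : PSExec n m σ} {i h : Fin n}
  {X : Finset (Fin m)} {q : ℝ} {p : ℕ} {x₀ : Fin m}

variable (π i X) in
def FrontStock (p : ℕ) : Prop :=
  ∀ x ∈ X, stock π p x = frontStock ((π i x : ℕ) : ℝ) (phaseStart π p)

def StockDominates (E : PSExec n m σ) (π : Fin n → Equiv.Perm (Fin m)) (X : Finset (Fin m))
    (p : ℕ) : Prop :=
  ∀ j ∉ X, E.q j (phaseStart π p) ≤ stock π p j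

structure LateFrontDeviation (E : PSExec n m σ) (π : Fin n → Equiv.Perm (Fin m)) (i : Fin n)
    (X : Finset (Fin m)) (q : ℝ) : Prop where
  eq_of_ne : ∀ h, h ≠ i → π h = σ h
  lt_card_iff : ∀ j, (π i j : ℕ) < #X ↔ j ∈ X
  le_div : q ≤ (m : ℝ) / n
  pos : ∀ x ∈ X, ∀ t ∈ Set.Ico 0 q, 0 < E.q x t
  card_add_one_le : (#X : ℝ) + 1 ≤ q

lemma rate_le_sum_c {r : Fin m → ℝ} {j : Fin m} {s : ℝ}
    (hone : ∀ h, Eats π r h j → E.c h j s = 1) : (rate π r j : ℝ) ≤ ∑ h, E.c h j s :=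
  calc (rate π r j : ℝ) = ∑ h ∈ {h | Eats π r h j}, E.c h j s := by
        rw [rate, card_eq_sum_ones, Nat.cast_sum, Nat.cast_one]
        exact sum_congr rfl fun h hh => (hone h (mem_filter.1 hh).2).symm
    _ ≤ ∑ h, E.c h j s :=
        sum_le_sum_of_subset_of_nonneg (filter_subset _ _) fun h _ _ => E.c_nonneg h j s

lemma not_eats_of_mem (hqm : q ≤ (m : ℝ) / n) (hlate : ∀ x ∈ X, ∀ t ∈ Set.Ico 0 q, 0 < E.q x t)
    {x : Fin m} (hx : x ∈ X) {t : ℝ} (ht : 0 ≤ t) (htq : t < q - 1) :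
    ¬ Eats σ (fun ℓ => E.q ℓ t) h x :=
  E.not_eats_of_pos ht (s := (t + 1 + q) / 2) (by linarith) (by linarith)
    (hlate x hx _ ⟨by linarith, by linarith⟩)

/-- Whatever `h` prefers to `j` is gone in the run, hence in `E` if it lies outside `X`; and `h`'s
favourite item in `E` does lie outside `X`. -/
lemma eats_of_eats_stock (hπ : ∀ h, h ≠ i → π h = σ h) (hqm : q ≤ (m : ℝ) / n)
    (hlate : ∀ x ∈ X, ∀ t ∈ Set.Ico 0 q, 0 < E.q x t) (hdom : StockDominates E π X p)
    (hh : h ≠ i) {j : Fin m} (hj : Eats π (stock π p) h j) {s : ℝ} (hs : phaseStart π p ≤ s)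
    (hsq : s < q - 1) (hpos : 0 < E.q j s) :
    Eats σ (fun ℓ => E.q ℓ s) h j := by
  have hs0 : 0 ≤ s := (phaseStart_nonneg p).trans hs
  obtain ⟨b, hb⟩ := exists_eats (π := σ) (r := fun ℓ => E.q ℓ s) ⟨j, hpos⟩ h
  have hbX : b ∉ X := fun hbX => not_eats_of_mem hqm hlate hbX hs0 hsq hb
  refine ⟨hpos, fun ℓ hℓ => le_trans ?_ (hb.2 ℓ hℓ)⟩
  by_contra! hlt
  have hb0 : stock π p b ≤ 0 := not_lt.1 fun hb' => by
    have hjb := hj.2 b hb'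
    rw [hπ h hh] at hjb
    exact hjb.not_gt hlt
  linarith [hdom b hbX, hb.1, E.q_le_of_le b (phaseStart_nonneg p) hs (by linarith)]

lemma LateFrontDeviation.not_eats (hD : LateFrontDeviation E π i X q)
    (hdom : phaseStart π p ≤ #X → StockDominates E π X p) (hfs : FrontStock π i X p)
    (hh : h ≠ i) {x : Fin m} (hx : x ∈ X) : ¬ Eats π (stock π p) h x := by
  intro he
  have hlt : phaseStart π p < (π i x : ℕ) + 1 := lt_of_frontStock_pos (hfs x hx ▸ he.1)
  have hcard : ((π i x : ℕ) : ℝ) + 1 ≤ #X := by exact_mod_cast (hD.lt_card_iff x).2 hx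
  have hT0 := phaseStart_nonneg (π := π) p
  have hTq : phaseStart π p < q - 1 := by linarith [hD.card_add_one_le]
  exact not_eats_of_mem hD.le_div hD.pos hx hT0 hTq <|
    eats_of_eats_stock hD.eq_of_ne hD.le_div hD.pos (hdom (by linarith)) hh he le_rfl hTq
      (hD.pos x hx _ ⟨hT0, by linarith⟩)

lemma frontStock_succ_of_card_le (hfront : ∀ j, (π i j : ℕ) < #X ↔ j ∈ X)
    (hk : (#X : ℝ) ≤ phaseStart π p) (hfs : FrontStock π i X p) : FrontStock π i X (p + 1) := by
  intro x hx
  have hx1 : ((π i x : ℕ) : ℝ) + 1 ≤ #X := by exact_mod_cast (hfront x).2 hx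
  have h0 : stock π p x = 0 := by rw [hfs x hx, frontStock_of_le (by linarith)]
  have hrate : rate π (stock π p) x = 0 :=
    Nat.eq_zero_of_not_pos fun hpos => (pos_of_rate_pos hpos).ne' h0
  rw [stock_succ, step_eq_self_of_rate_eq_zero hrate, h0, frontStock_of_le]
  linarith [phaseStart_mono (π := π) p.le_succ]

lemma stockDominates_succ_of_card_le (hk : (#X : ℝ) ≤ phaseStart π p)
    (hk' : phaseStart π (p + 1) ≤ #X) (hdom : StockDominates E π X p) :
    StockDominates E π X (p + 1) := by
  have hT : phaseStart π (p + 1) = phaseStart π p :=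
    le_antisymm (hk'.trans hk) (phaseStart_mono p.le_succ)
  have hlen : phaseLength π (stock π p) = 0 := by linarith [phaseStart_succ (π := π) p]
  intro j hj
  rw [hT, stock_succ, step, hlen, zero_mul, sub_zero]
  exact hdom j hj

lemma exists_mem_val_eq_floor (hfront : ∀ j, (π i j : ℕ) < #X ↔ j ∈ X) (hT : phaseStart π p < #X) :
    ∃ x₀ ∈ X, (π i x₀ : ℕ) = ⌊phaseStart π p⌋₊ := by
  have hlt : ⌊phaseStart π p⌋₊ < #X := (Nat.floor_lt (phaseStart_nonneg p)).2 hT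
  let x₀ := (π i).symm ⟨_, hlt.trans_le (card_le_univ X |>.trans_eq (Fintype.card_fin m))⟩
  exact ⟨x₀, (hfront x₀).1 (by simp [x₀, hlt]), by simp [x₀]⟩

lemma eats_front (hfront : ∀ j, (π i j : ℕ) < #X ↔ j ∈ X) (hfs : FrontStock π i X p)
    (hT : phaseStart π p < #X) {x₀ : Fin m} (hx₀X : x₀ ∈ X)
    (hx₀ : (π i x₀ : ℕ) = ⌊phaseStart π p⌋₊) : Eats π (stock π p) i x₀ := by
  have hT0 := phaseStart_nonneg (π := π) p
  refine ⟨?_, fun ℓ hℓ => ?_⟩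
  · rw [hfs x₀ hx₀X, hx₀, frontStock_of_mem (Nat.floor_le hT0) (Nat.lt_floor_add_one _).le]
    linarith [Nat.lt_floor_add_one (phaseStart π p)]
  · rw [Fin.le_def, hx₀]
    by_cases hℓX : ℓ ∈ X
    · rw [hfs ℓ hℓX] at hℓ
      have hlt : phaseStart π p < ((π i ℓ : ℕ) + 1 : ℕ) := by
        exact_mod_cast lt_of_frontStock_pos hℓ
      have := (Nat.floor_lt hT0).2 hlt
      omega
    · have := not_lt.1 (mt (hfront ℓ).1 hℓX)
      have := (Nat.floor_lt hT0).2 hT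
      omega

namespace LateFrontDeviation

lemma rate_of_mem (hD : LateFrontDeviation E π i X q)
    (hdom : phaseStart π p ≤ #X → StockDominates E π X p)
    (hfs : FrontStock π i X p) (hT : phaseStart π p < #X) (hx₀X : x₀ ∈ X)
    (hx₀ : (π i x₀ : ℕ) = ⌊phaseStart π p⌋₊) {x : Fin m} (hx : x ∈ X) :
    rate π (stock π p) x = if x = x₀ then 1 else 0 := by
  have he₀ := eats_front hD.lt_card_iff hfs hT hx₀X hx₀
  have hiff : ∀ h, Eats π (stock π p) h x ↔ h = i ∧ x = x₀ := fun h =>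
    ⟨fun he => if hh : h = i then ⟨hh, he.eq (hh ▸ he₀)⟩ else (hD.not_eats hdom hfs hh hx he).elim,
      fun ⟨hh, hx⟩ => hh ▸ hx ▸ he₀⟩
  simp only [rate, hiff]
  split_ifs with hxx <;> simp [hxx, filter_eq']

lemma phaseStart_succ_le (hD : LateFrontDeviation E π i X q)
    (hdom : phaseStart π p ≤ #X → StockDominates E π X p)
    (hfs : FrontStock π i X p) (hT : phaseStart π p < #X) (hx₀X : x₀ ∈ X)
    (hx₀ : (π i x₀ : ℕ) = ⌊phaseStart π p⌋₊) :
    phaseStart π (p + 1) ≤ ⌊phaseStart π p⌋₊ + 1 := by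
  have hT0 := phaseStart_nonneg (π := π) p
  have hlen := phaseLength_mul_rate_le (π := π) (stock_nonneg (π := π) p) x₀
  rw [hD.rate_of_mem hdom hfs hT hx₀X hx₀ hx₀X, if_pos rfl, hfs x₀ hx₀X, hx₀,
    frontStock_of_mem (Nat.floor_le hT0) (Nat.lt_floor_add_one _).le] at hlen
  rw [phaseStart_succ]
  push_cast at hlen
  linarith

lemma frontStock_succ (hD : LateFrontDeviation E π i X q)
    (hdom : phaseStart π p ≤ #X → StockDominates E π X p)
    (hfs : FrontStock π i X p) (hT : phaseStart π p < #X) (hx₀X : x₀ ∈ X)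
    (hx₀ : (π i x₀ : ℕ) = ⌊phaseStart π p⌋₊) : FrontStock π i X (p + 1) := by
  have hT0 := phaseStart_nonneg (π := π) p
  have hfl := Nat.floor_le hT0
  have hfl' := Nat.lt_floor_add_one (phaseStart π p)
  have hmono := phaseStart_mono (π := π) p.le_succ
  have hT1 := hD.phaseStart_succ_le hdom hfs hT hx₀X hx₀
  intro x hx
  rw [stock_succ, step, hD.rate_of_mem hdom hfs hT hx₀X hx₀ hx, hfs x hx]
  split_ifs with hxx
  · subst hxx
    rw [hx₀, frontStock_of_mem hfl hfl'.le, frontStock_of_mem (hfl.trans hmono) hT1,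
      phaseStart_succ]
    push_cast
    ring
  · have hne : (π i x : ℕ) ≠ ⌊phaseStart π p⌋₊ := fun h =>
      hxx ((π i).injective (Fin.ext (h.trans hx₀.symm)))
    rw [Nat.cast_zero, mul_zero, sub_zero]
    rcases Nat.lt_or_gt_of_ne hne with hlt | hgt
    · have : ((π i x : ℕ) : ℝ) + 1 ≤ ⌊phaseStart π p⌋₊ := by exact_mod_cast hlt
      rw [frontStock_of_le (by linarith), frontStock_of_le (by linarith)]
    · have : (⌊phaseStart π p⌋₊ : ℝ) + 1 ≤ (π i x : ℕ) := by exact_mod_cast hgt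
      rw [frontStock_of_ge (by linarith), frontStock_of_ge (by linarith)]

lemma phaseStart_succ_le_card (hD : LateFrontDeviation E π i X q)
    (hdom : phaseStart π p ≤ #X → StockDominates E π X p)
    (hfs : FrontStock π i X p) (hT : phaseStart π p < #X) (hx₀X : x₀ ∈ X)
    (hx₀ : (π i x₀ : ℕ) = ⌊phaseStart π p⌋₊) : phaseStart π (p + 1) ≤ #X := by
  have hfloor : (⌊phaseStart π p⌋₊ : ℝ) + 1 ≤ #X := by
    exact_mod_cast (Nat.floor_lt (phaseStart_nonneg p)).2 hT
  linarith [hD.phaseStart_succ_le hdom hfs hT hx₀X hx₀]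

/-- Each agent eating `j ∉ X` in the run eats it in `E` as well, so `E` keeps consuming `j` at
least as fast as the run. -/
lemma stockDominates_succ (hD : LateFrontDeviation E π i X q)
    (hdom : phaseStart π p ≤ #X → StockDominates E π X p)
    (hfs : FrontStock π i X p) (hT : phaseStart π p < #X) (hx₀X : x₀ ∈ X)
    (hx₀ : (π i x₀ : ℕ) = ⌊phaseStart π p⌋₊) : StockDominates E π X (p + 1) := by
  have hT0 := phaseStart_nonneg (π := π) p
  have hmono := phaseStart_mono (π := π) p.le_succ
  have hT1 := hD.phaseStart_succ_le_card hdom hfs hT hx₀X hx₀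
  have hTm : phaseStart π (p + 1) ≤ (m : ℝ) / n := by
    linarith [hD.le_div, hD.card_add_one_le]
  intro j hj
  rcases (E.q_mem j _ ⟨hT0.trans hmono, hTm⟩).1.eq_or_lt with h0 | hpos
  · exact h0 ▸ stock_nonneg _ j
  have hrate : ∀ s ∈ Set.Ico (phaseStart π p) (phaseStart π (p + 1)),
      (rate π (stock π p) j : ℝ) ≤ ∑ h, E.c h j s := fun s hs => by
    have hsq : s < q - 1 := by linarith [hs.2, hD.card_add_one_le]
    have hspos : 0 < E.q j s := hpos.trans_le (E.q_le_of_le j (hT0.trans hs.1) hs.2.le hTm)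
    refine rate_le_sum_c fun h he => ?_
    have hhi : h ≠ i := by
      rintro rfl
      exact hj (he.eq (eats_front hD.lt_card_iff hfs hT hx₀X hx₀) ▸ hx₀X)
    have hE := eats_of_eats_stock hD.eq_of_ne hD.le_div hD.pos (hdom hT.le) hhi he hs.1 hsq hspos
    exact E.c_one h j s ⟨hT0.trans hs.1, by linarith [hs.2]⟩ hE.1 hE.2
  have hdec := E.q_le_sub_mul j hT0 hmono hTm hrate
  have hlen : phaseStart π (p + 1) - phaseStart π p = phaseLength π (stock π p) := by
    rw [phaseStart_succ, add_sub_cancel_left]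
  rw [hlen] at hdec
  rw [stock_succ, step]
  linarith [hdom hT.le j hj]

lemma stockDominates_and_frontStock (hD : LateFrontDeviation E π i X q) (p : ℕ) :
    (phaseStart π p ≤ #X → StockDominates E π X p) ∧ FrontStock π i X p := by
  induction p with
  | zero =>
    refine ⟨fun _ j _ => ?_, fun x _ => ?_⟩
    · simpa [phaseStart_zero, stock_zero] using (E.q_mem j 0 ⟨le_rfl, by positivity⟩).2
    · rw [stock_zero, phaseStart_zero, frontStock_of_ge (by positivity)]
  | succ p ih =>
    obtain ⟨hdom, hfs⟩ := ih
    by_cases hT : phaseStart π p < #X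
    · obtain ⟨x₀, hx₀X, hx₀⟩ := exists_mem_val_eq_floor hD.lt_card_iff hT
      exact ⟨fun _ => hD.stockDominates_succ hdom hfs hT hx₀X hx₀,
        hD.frontStock_succ hdom hfs hT hx₀X hx₀⟩
    · push Not at hT
      exact ⟨fun hk => stockDominates_succ_of_card_le hT hk
          (hdom ((phaseStart_mono p.le_succ).trans hk)),
        frontStock_succ_of_card_le hD.lt_card_iff hT hfs⟩

lemma not_eats_of_ne (hD : LateFrontDeviation E π i X q) {h : Fin n} (hh : h ≠ i) {x : Fin m} (hx : x ∈ X) (p : ℕ) :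
    ¬ Eats π (stock π p) h x :=
  hD.not_eats (hD.stockDominates_and_frontStock p).1 (hD.stockDominates_and_frontStock p).2 hh hx

end LateFrontDeviation

end PS

open PS in
theorem ps_late_items_won_general (n m : ℕ) (v' : Fin n → Fin m → ℝ)
    (hv' : ∀ i, IsUnitSum (v' i))
    (σ : Fin n → Equiv.Perm (Fin m)) (E : PSExec n m σ) (hNE : IsPSNash v' σ E)
    (i : Fin n) (q : ℝ) (X : Finset (Fin m))
    (hcard : (X.card : ℤ) ≤ ⌊q⌋ - 1)
    (hlate : ∀ j ∈ X, q ≤ E.consTime j) :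
    ∑ j ∈ X, v' i j ≤ E.payoff v' i := by
  rcases X.eq_empty_or_nonempty with rfl | ⟨x, hx⟩
  · exact E.sum_le_payoff (hv' i).1 (by simp)
  have hkq : (#X : ℝ) + 1 ≤ q := by
    have hfloor : ((#X : ℤ) : ℝ) ≤ ((⌊q⌋ - 1 : ℤ) : ℝ) := by exact_mod_cast hcard
    push_cast at hfloor
    linarith [Int.floor_le q]
  have hqm : q ≤ (m : ℝ) / n :=
    E.le_div_of_le_consTime (by linarith [(#X).cast_nonneg (α := ℝ)]) (hlate x hx)
  obtain ⟨τ, hτ⟩ := exists_perm_val_lt_card_iff_mem X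
  have hD : LateFrontDeviation E (Function.update σ i τ) i X q :=
    { eq_of_ne := fun h hh => Function.update_of_ne hh τ σ
      lt_card_iff := by simpa using hτ
      le_div := hqm
      pos := fun x hx t ht =>
        E.q_pos_of_lt_consTime ⟨ht.1, ht.2.le.trans hqm⟩ (ht.2.trans_le (hlate x hx))
      card_add_one_le := hkq }
  let E' := run (Function.update σ i τ) i.pos
  calc ∑ j ∈ X, v' i j ≤ E'.payoff v' i :=
        E'.sum_le_payoff (hv' i).1 fun x hx =>
          integral_consRate_eq_one i.pos fun h hh => hD.not_eats_of_ne hh hx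
    _ ≤ E.payoff v' i := hNE i τ E'

/-- **Late items can be won outright under Probabilistic Serial.**  Let `v'` be unit-sum
true valuations and let `σ` (with execution `E`) be a pure Nash equilibrium of PS with
respect to `v'`.  Let `i` be any agent, `q ≥ 2` a real number, and `X` a set of at most
`⌊q⌋ − 1` distinct items whose consumption times under `σ` are all at least `q`.  Then
agent `i`'s equilibrium payoff is at least `∑_{j ∈ X} v'_i(j)`. -/
theorem ps_late_items_won (n m : ℕ) (v' : Fin n → Fin m → ℝ)
    (hv' : ∀ i, IsUnitSum (v' i))
    (σ : Fin n → Equiv.Perm (Fin m)) (E : PSExec n m σ) (hNE : IsPSNash v' σ E)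
    (i : Fin n) (q : ℝ) (hq : 2 ≤ q) (X : Finset (Fin m))
    (hcard : (X.card : ℤ) ≤ ⌊q⌋ - 1)
    (hlate : ∀ j ∈ X, q ≤ E.consTime j) :
    ∑ j ∈ X, v' i j ≤ E.payoff v' i :=
  ps_late_items_won_general n m v' hv' σ E hNE i q X hcard hlate
end
end

section
/- For the one-sided allocation problem, the pure price of stability of any mechanism with a safety strategy is Ω(√n). Precisely: let n ≥ 4 be a perfect square, m = n, and let M be any mechanism possessing a safety strategy. Define true unit-sum valuations v′ by: v′_i(j) = 1 if i = j ≤ √n; v′_i(j) = 1/√n if i > √n and j ≤ √n; v′_i(j) = 0 otherwise. Then every profile that is a pure Nash equilibrium of M with respect to v′ has social welfare at most 2, while OPT(v′) = √n. In particular the pure price of stability of every mechanism with a safety strategy is at least √n/2. -/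
noncomputable section

/-- The mechanism `p` has a safety strategy: for every agent `i` and every true unit-sum
valuation `v'ᵢ` there is a unit-sum report `u` such that whatever the others report, for
every `k ∈ {1,…,m}` and every set `T` of `k` items with the `k` highest `v'ᵢ`-values,
agent `i` receives the items of `T` with total probability at least `k/n`. -/
def HasSafetyStrategy (n m : ℕ) (p : (Fin n → Fin m → ℝ) → Fin n → Fin m → ℝ) : Prop :=
  ∀ (i : Fin n) (v'i : Fin m → ℝ), IsUnitSum v'i →
    ∃ u : Fin m → ℝ, IsUnitSum u ∧
      ∀ v : Fin n → Fin m → ℝ, (∀ i', IsUnitSum (v i')) → v i = u →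
        ∀ k : ℕ, 1 ≤ k → k ≤ m →
          ∀ T : Finset (Fin m), T.card = k →
            (∀ a ∈ T, ∀ b, b ∉ T → v'i b ≤ v'i a) →
            (k : ℝ) / (n : ℝ) ≤ ∑ j ∈ T, p v i j

/-! The `r² - r` agents of index at least `r` value the first `r` items uniformly, so by
playing the safety strategy such an agent would secure mass `r / r² = 1 / r` on them; in an
equilibrium it must therefore already hold that much. Together these agents hold at least
`r - 1` of the `r` valuable items, which leaves mass at most `1` there, and hence payoff at
most `1`, for the first `r` agents; the payoff of the others is their mass divided by `r`,
again at most `1`. -/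

open Finset

def uniformValuation {m : ℕ} (T : Finset (Fin m)) : Fin m → ℝ :=
  fun j => if j ∈ T then 1 / #T else 0

section UniformValuation

variable {m : ℕ} (T : Finset (Fin m))

theorem isUnitSum_uniformValuation (hT : T.Nonempty) : IsUnitSum (uniformValuation T) := by
  refine ⟨fun j => by unfold uniformValuation; split_ifs <;> positivity, ?_⟩
  have : (#T : ℝ) ≠ 0 := by exact_mod_cast hT.card_ne_zero
  simp only [uniformValuation, sum_ite_mem, univ_inter, sum_const, nsmul_eq_mul]
  field_simp

theorem uniformValuation_le_of_mem {a : Fin m} (ha : a ∈ T) (b : Fin m) :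
    uniformValuation T b ≤ uniformValuation T a := by
  unfold uniformValuation
  split_ifs <;> first | rfl | positivity

theorem mpayoff_eq_of_eq_uniformValuation {n : ℕ}
    (p : (Fin n → Fin m → ℝ) → Fin n → Fin m → ℝ)
    {v' : Fin n → Fin m → ℝ} {i : Fin n} (hi : v' i = uniformValuation T)
    (v : Fin n → Fin m → ℝ) : Mpayoff p v' v i = (∑ j ∈ T, p v i j) / #T := by
  simp only [Mpayoff, hi, uniformValuation, mul_ite, mul_zero, sum_ite_mem, univ_inter,
    sum_div, mul_one_div]

end UniformValuation

section Mechanism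

variable {n m : ℕ} {p : (Fin n → Fin m → ℝ) → Fin n → Fin m → ℝ}
  {v' s : Fin n → Fin m → ℝ}

theorem mpayoff_le_sum_of_le_one {T : Finset (Fin m)} {i : Fin n} (hp : ∀ j, 0 ≤ p s i j)
    (hle : ∀ j, v' i j ≤ 1) (hzero : ∀ j ∉ T, v' i j = 0) :
    Mpayoff p v' s i ≤ ∑ j ∈ T, p s i j := by
  rw [Mpayoff, ← sum_subset (subset_univ T) fun j _ hj => by rw [hzero j hj, mul_zero]]
  exact sum_le_sum fun j _ => mul_le_of_le_one_right (hp j) (hle j)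

theorem IsMechanism.sum_sum_eq_card (hp : IsMechanism n m p) {v : Fin n → Fin m → ℝ}
    (hv : ∀ i, IsUnitSum (v i)) (T : Finset (Fin m)) : ∑ i, ∑ j ∈ T, p v i j = #T := by
  rw [sum_comm]
  simp [(hp v hv).2]

theorem IsMNash.card_div_le_sum_of_eq_uniformValuation (hsafe : HasSafetyStrategy n m p)
    (hs : IsMNash p v' s) {i : Fin n} {T : Finset (Fin m)} (hT : T.Nonempty)
    (hi : v' i = uniformValuation T) : (#T : ℝ) / n ≤ ∑ j ∈ T, p s i j := by
  obtain ⟨u, hu, hguard⟩ := hsafe i (v' i) (hi ▸ isUnitSum_uniformValuation T hT)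
  have hupdate : ∀ i', IsUnitSum (Function.update s i u i') := by
    intro i'
    rcases eq_or_ne i' i with rfl | h
    · simpa using hu
    · simpa [h] using hs.1 i'
  have hsafe_mass := hguard _ hupdate (Function.update_self i u s) #T hT.card_pos
    ((card_le_univ T).trans_eq (Fintype.card_fin m)) T rfl
    fun a ha b _ => by rw [hi]; exact uniformValuation_le_of_mem T ha b
  have hdeviate := hs.2 i u hu
  rw [mpayoff_eq_of_eq_uniformValuation T p hi, mpayoff_eq_of_eq_uniformValuation T p hi]
    at hdeviate
  exact hsafe_mass.trans <| (div_le_div_iff_of_pos_right (by simpa using hT.card_pos)).1 hdeviate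

end Mechanism

section HardInstance

variable {n r : ℕ}

def lowIndices (n r : ℕ) : Finset (Fin n) := {j | (j : ℕ) < r}

def hardValuation (n r : ℕ) : Fin n → Fin n → ℝ := fun i j =>
  if (i : ℕ) = (j : ℕ) ∧ (i : ℕ) < r then 1
  else if r ≤ (i : ℕ) ∧ (j : ℕ) < r then 1 / (r : ℝ) else 0

@[simp]
theorem mem_lowIndices {j : Fin n} : j ∈ lowIndices n r ↔ (j : ℕ) < r := by
  simp [lowIndices]

theorem card_lowIndices (hrn : r ≤ n) : #(lowIndices n r) = r := by
  rw [lowIndices, Fin.card_filter_val_lt, min_eq_right hrn]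

theorem hardValuation_le_one (i j : Fin n) : hardValuation n r i j ≤ 1 := by
  unfold hardValuation
  split_ifs
  exacts [le_rfl, (one_div (r : ℝ)).trans_le (Nat.cast_inv_le_one r), zero_le_one]

theorem hardValuation_eq_zero_of_notMem (i : Fin n) {j : Fin n} (hj : j ∉ lowIndices n r) :
    hardValuation n r i j = 0 := by
  rw [mem_lowIndices] at hj
  simp only [hardValuation, hj, and_false, if_false, ite_eq_right_iff]
  omega

theorem hardValuation_eq_uniformValuation (hrn : r ≤ n) {i : Fin n} (hi : i ∉ lowIndices n r) :
    hardValuation n r i = uniformValuation (lowIndices n r) := by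
  rw [mem_lowIndices, not_lt] at hi
  ext j
  simp [hardValuation, uniformValuation, card_lowIndices hrn, hi, not_lt.2 hi]

theorem iSup_hardValuation (j : Fin n) :
    ⨆ i, hardValuation n r i j = if j ∈ lowIndices n r then 1 else 0 := by
  have : Nonempty (Fin n) := ⟨j⟩
  split_ifs with hj
  · refine le_antisymm (ciSup_le fun i => hardValuation_le_one i j) ?_
    -- agent `j` itself values item `j` at `1`
    refine le_ciSup_of_le (Set.finite_range _).bddAbove j ?_
    simp_all [hardValuation]
  · simp [hardValuation_eq_zero_of_notMem _ hj]

theorem sum_iSup_hardValuation (hrn : r ≤ n) : ∑ j, ⨆ i, hardValuation n r i j = r := by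
  simp only [iSup_hardValuation, sum_ite_mem, univ_inter, sum_const, card_lowIndices hrn, nsmul_one]

end HardInstance

theorem IsMNash.one_div_le_sum_lowIndices {r : ℕ} (hr : 0 < r)
    {p : (Fin (r ^ 2) → Fin (r ^ 2) → ℝ) → Fin (r ^ 2) → Fin (r ^ 2) → ℝ}
    (hsafe : HasSafetyStrategy (r ^ 2) (r ^ 2) p)
    {s : Fin (r ^ 2) → Fin (r ^ 2) → ℝ} (hs : IsMNash p (hardValuation (r ^ 2) r) s)
    {i : Fin (r ^ 2)} (hi : i ∉ lowIndices (r ^ 2) r) :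
    1 / (r : ℝ) ≤ ∑ j ∈ lowIndices (r ^ 2) r, p s i j := by
  have hL : #(lowIndices (r ^ 2) r) = r := card_lowIndices (Nat.le_self_pow two_ne_zero r)
  calc 1 / (r : ℝ) = #(lowIndices (r ^ 2) r) / ((r ^ 2 : ℕ) : ℝ) := by
        rw [hL]; push_cast; field_simp
    _ ≤ _ := hs.card_div_le_sum_of_eq_uniformValuation hsafe (card_pos.1 (hL.symm ▸ hr))
        (hardValuation_eq_uniformValuation (Nat.le_self_pow two_ne_zero r) hi)

theorem IsMNash.sum_mpayoff_hardValuation_le_two {r : ℕ}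
    {p : (Fin (r ^ 2) → Fin (r ^ 2) → ℝ) → Fin (r ^ 2) → Fin (r ^ 2) → ℝ}
    (hmech : IsMechanism (r ^ 2) (r ^ 2) p) (hsafe : HasSafetyStrategy (r ^ 2) (r ^ 2) p)
    {s : Fin (r ^ 2) → Fin (r ^ 2) → ℝ} (hs : IsMNash p (hardValuation (r ^ 2) r) s) :
    ∑ i, Mpayoff p (hardValuation (r ^ 2) r) s i ≤ 2 := by
  obtain rfl | hr := r.eq_zero_or_pos
  · simp
  have hrn : r ≤ r ^ 2 := Nat.le_self_pow two_ne_zero r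
  have hr' : (0 : ℝ) < r := by exact_mod_cast hr
  set L := lowIndices (r ^ 2) r
  set mass : Fin (r ^ 2) → ℝ := fun i => ∑ j ∈ L, p s i j
  have hL : #L = r := card_lowIndices hrn
  have hpos := (hmech s hs.1).1
  have hlow : ∀ i ∈ L, Mpayoff p (hardValuation (r ^ 2) r) s i ≤ mass i := fun i _ =>
    mpayoff_le_sum_of_le_one (hpos i) (hardValuation_le_one i) fun j hj =>
      hardValuation_eq_zero_of_notMem i hj
  have hhigh : ∀ i ∈ Lᶜ, Mpayoff p (hardValuation (r ^ 2) r) s i = mass i / r := by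
    intro i hi
    rw [mpayoff_eq_of_eq_uniformValuation L p
      (hardValuation_eq_uniformValuation hrn (mem_compl.1 hi)), hL]
  have hhigh_mass : (r : ℝ) - 1 ≤ ∑ i ∈ Lᶜ, mass i := by
    have hcount := card_nsmul_le_sum _ _ _ fun i hi =>
      hs.one_div_le_sum_lowIndices hr hsafe (mem_compl.1 hi)
    rw [card_compl, Fintype.card_fin, hL, nsmul_eq_mul, Nat.cast_sub hrn] at hcount
    calc (r : ℝ) - 1 = ((r ^ 2 : ℕ) - r) * (1 / r) := by push_cast; field_simp
      _ ≤ _ := hcount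
  have htotal : ∑ i ∈ L, mass i + ∑ i ∈ Lᶜ, mass i = r := by
    rw [sum_add_sum_compl, hmech.sum_sum_eq_card hs.1, hL]
  have hlow_mass : 0 ≤ ∑ i ∈ L, mass i := sum_nonneg fun i _ => sum_nonneg fun j _ => hpos i j
  calc ∑ i, Mpayoff p (hardValuation (r ^ 2) r) s i
      = ∑ i ∈ L, Mpayoff p (hardValuation (r ^ 2) r) s i
        + ∑ i ∈ Lᶜ, Mpayoff p (hardValuation (r ^ 2) r) s i := (sum_add_sum_compl L _).symm
    _ ≤ ∑ i ∈ L, mass i + (∑ i ∈ Lᶜ, mass i) / r := by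
      rw [sum_congr rfl hhigh, ← sum_div]
      gcongr with i hi
      exact hlow i hi
    _ ≤ 1 + 1 := by
      gcongr
      · linarith
      · rw [div_le_one hr']; linarith
    _ = 2 := one_add_one_eq_two

theorem safety_strategy_pos_lower_general (r : ℕ)
    (p : (Fin (r ^ 2) → Fin (r ^ 2) → ℝ) → Fin (r ^ 2) → Fin (r ^ 2) → ℝ)
    (hmech : IsMechanism (r ^ 2) (r ^ 2) p)
    (hsafe : HasSafetyStrategy (r ^ 2) (r ^ 2) p)
    (v' : Fin (r ^ 2) → Fin (r ^ 2) → ℝ)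
    (hv' : ∀ i j, v' i j =
      if (i : ℕ) = (j : ℕ) ∧ (i : ℕ) < r then 1
      else if r ≤ (i : ℕ) ∧ (j : ℕ) < r then 1 / (r : ℝ) else 0) :
    (∑ j, ⨆ i, v' i j) = (r : ℝ) ∧
    ∀ s : Fin (r ^ 2) → Fin (r ^ 2) → ℝ, IsMNash p v' s →
      ∑ i, Mpayoff p v' s i ≤ 2 := by
  obtain rfl : v' = hardValuation (r ^ 2) r := funext₂ hv'
  exact ⟨sum_iSup_hardValuation (Nat.le_self_pow two_ne_zero r),
    fun s hs => hs.sum_mpayoff_hardValuation_le_two hmech hsafe⟩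

/-- **The pure price of stability of any mechanism with a safety strategy is `Ω(√n)`.**
With `n = m = r²` (`r ≥ 2`) and true valuations `v'` given by: `v'ᵢ(j) = 1` if
`i = j < r`, `v'ᵢ(j) = 1/r` if `i ≥ r` and `j < r`, and `v'ᵢ(j) = 0` otherwise, the
optimal welfare is `√n = r`, but every pure Nash equilibrium of a mechanism with a safety
strategy has social welfare at most `2`. -/
theorem safety_strategy_pos_lower (r : ℕ) (hr : 2 ≤ r)
    (p : (Fin (r ^ 2) → Fin (r ^ 2) → ℝ) → Fin (r ^ 2) → Fin (r ^ 2) → ℝ)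
    (hmech : IsMechanism (r ^ 2) (r ^ 2) p)
    (hsafe : HasSafetyStrategy (r ^ 2) (r ^ 2) p)
    (v' : Fin (r ^ 2) → Fin (r ^ 2) → ℝ)
    (hv' : ∀ i j, v' i j =
      if (i : ℕ) = (j : ℕ) ∧ (i : ℕ) < r then 1
      else if r ≤ (i : ℕ) ∧ (j : ℕ) < r then 1 / (r : ℝ) else 0) :
    (∑ j, ⨆ i, v' i j) = (r : ℝ) ∧
    ∀ s : Fin (r ^ 2) → Fin (r ^ 2) → ℝ, IsMNash p v' s →
      ∑ i, Mpayoff p v' s i ≤ 2 :=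
  safety_strategy_pos_lower_general r p hmech hsafe v' hv'
end
end

section
/- For the asymmetric one-sided allocation problem with multi-unit demand agents, the price of anarchy of Random Priority is at least n when m ≥ n². Precisely: let n ≥ 2, m = n², and ε ∈ (0, 1/2). Define unit-sum true valuations by v′_i(i) = 1 − ε, v′_i(j) = ε/(n−1) for j ∈ {1,…,n} \ {i}, and v′_i(j) = 0 for n < j ≤ m. Then truthful reporting is a pure Nash equilibrium of Random Priority, its social welfare equals 1 (for every realized agent ordering, the first agent receives true value 1 and every other agent receives true value 0), and OPT(v′) = n(1−ε). Hence the pure price of anarchy of Random Priority on these instances is at least n(1−ε). -/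
/-!
The first agent of any ordering values only the `n` items `j < n`, each of them positively, and
has to take `n` items, so it takes exactly these and gets value `1`; every later agent is left
with items nobody values. Hence every ordering has welfare `1`, whereas giving each agent `i`
item `i` yields `n(1 - ε)`. Truthfulness is an equilibrium: a deviating agent that is first
already gets the maximal value `1`, and one that is not first gets `0` whatever it reports,
since the first agent's report, and hence its pick, is unchanged.
-/

noncomputable section

/-- The set of items still available when the agent at position `pos` (in the random
ordering `π`) gets to pick, given the selection rule `g`. -/
def RPavail (n m : ℕ)
    (g : (Fin n → Fin m → ℝ) → Equiv.Perm (Fin n) → Fin n → Finset (Fin m))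
    (v : Fin n → Fin m → ℝ) (π : Equiv.Perm (Fin n)) (pos : Fin n) : Finset (Fin m) :=
  Finset.univ \ (Finset.univ.filter (fun p' => p' < pos)).biUnion (fun p' => g v π (π p'))

/-- `g` is a Random Priority selection rule (with some fixed tie-breaking): for every
reported profile `v` and every ordering `π` of the agents, the agent at each position
picks, from the items not yet taken, a set of `m/n` items of maximum total reported
value. -/
def IsRPSelection (n m : ℕ)
    (g : (Fin n → Fin m → ℝ) → Equiv.Perm (Fin n) → Fin n → Finset (Fin m)) : Prop :=
  ∀ (v : Fin n → Fin m → ℝ) (π : Equiv.Perm (Fin n)) (pos : Fin n),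
    g v π (π pos) ⊆ RPavail n m g v π pos ∧
    (g v π (π pos)).card = m / n ∧
    ∀ S ⊆ RPavail n m g v π pos, S.card = m / n →
      ∑ j ∈ S, v (π pos) j ≤ ∑ j ∈ g v π (π pos), v (π pos) j

/-- Agent `i`'s expected payoff under Random Priority (the ordering of the agents being
uniformly random) with selection rule `g`, true valuations `v'` and reports `v`. -/
def RPpayoff (n m : ℕ)
    (g : (Fin n → Fin m → ℝ) → Equiv.Perm (Fin n) → Fin n → Finset (Fin m))
    (v' v : Fin n → Fin m → ℝ) (i : Fin n) : ℝ :=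
  (∑ π : Equiv.Perm (Fin n), ∑ j ∈ g v π i, v' i j) / (Nat.factorial n : ℝ)

/-- The reported profile `v` is a pure Nash equilibrium of Random Priority with respect to
the true valuations `v'`. -/
def IsRPNash (n m : ℕ)
    (g : (Fin n → Fin m → ℝ) → Equiv.Perm (Fin n) → Fin n → Finset (Fin m))
    (v' v : Fin n → Fin m → ℝ) : Prop :=
  ∀ (i : Fin n) (w : Fin m → ℝ), IsUnitSum w →
    RPpayoff n m g v' (Function.update v i w) i ≤ RPpayoff n m g v' v i

open Finset

theorem Finset.subset_of_sum_le_of_pos_of_eq_zero {α M : Type*} [DecidableEq α]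
    [AddCommMonoid M] [PartialOrder M] [IsOrderedCancelAddMonoid M]
    {f : α → M} {S T : Finset α} (hpos : ∀ j ∈ T, 0 < f j) (hzero : ∀ j ∉ T, f j = 0)
    (h : ∑ j ∈ T, f j ≤ ∑ j ∈ S, f j) : T ⊆ S := by
  by_contra hTS
  obtain ⟨t, htT, htS⟩ := not_subset.mp hTS
  have hS : ∑ j ∈ S ∩ T, f j = ∑ j ∈ S, f j :=
    sum_subset inter_subset_left fun j hjS hj =>
      hzero j fun hjT => hj (mem_inter.2 ⟨hjS, hjT⟩)
  have hlt : ∑ j ∈ S ∩ T, f j < ∑ j ∈ T, f j :=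
    sum_lt_sum_of_subset inter_subset_right htT (fun ht => htS (mem_inter.1 ht).1) (hpos t htT)
      fun j hj _ => (hpos j hj).le
  exact (h.trans hS.symm.le).not_gt hlt

section RandomPriority

variable {n m : ℕ}
  {g : (Fin n → Fin m → ℝ) → Equiv.Perm (Fin n) → Fin n → Finset (Fin m)}

theorem RPavail_first {v : Fin n → Fin m → ℝ} {π : Equiv.Perm (Fin n)} (h0 : 0 < n) :
    RPavail n m g v π ⟨0, h0⟩ = univ := by
  have : univ.filter (fun p : Fin n => p < ⟨0, h0⟩) = ∅ := by
    ext p; simp [Fin.lt_def]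
  simp [RPavail, this]

theorem IsRPSelection.pick_first_eq (hg : IsRPSelection n m g) {v : Fin n → Fin m → ℝ}
    {π : Equiv.Perm (Fin n)} (h0 : 0 < n) {T : Finset (Fin m)} (hT : #T = m / n)
    (hpos : ∀ j ∈ T, 0 < v (π ⟨0, h0⟩) j) (hzero : ∀ j ∉ T, v (π ⟨0, h0⟩) j = 0) :
    g v π (π ⟨0, h0⟩) = T := by
  classical
  obtain ⟨-, hcard, hmax⟩ := hg v π ⟨0, h0⟩
  have hTS : T ⊆ g v π (π ⟨0, h0⟩) :=
    subset_of_sum_le_of_pos_of_eq_zero hpos hzero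
      (hmax T (by rw [RPavail_first]; exact subset_univ T) hT)
  exact (eq_of_subset_of_card_le hTS (by rw [hcard, hT])).symm

theorem IsRPSelection.disjoint_pick_of_lt (hg : IsRPSelection n m g) (v : Fin n → Fin m → ℝ)
    (π : Equiv.Perm (Fin n)) {p q : Fin n} (hpq : p < q) :
    Disjoint (g v π (π p)) (g v π (π q)) := by
  classical
  refine disjoint_right.mpr fun j hjq hjp => ?_
  have hj := (hg v π q).1 hjq
  simp only [RPavail, mem_sdiff, mem_biUnion, mem_filter, mem_univ, true_and] at hj
  exact hj ⟨p, hpq, hjp⟩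

theorem sum_RPpayoff (v' v : Fin n → Fin m → ℝ) :
    ∑ i, RPpayoff n m g v' v i =
      (∑ π : Equiv.Perm (Fin n), ∑ p, ∑ j ∈ g v π (π p), v' (π p) j) /
        (Nat.factorial n : ℝ) := by
  simp only [RPpayoff, ← sum_div]
  rw [sum_comm]
  congr 1
  exact sum_congr rfl fun π _ => (Equiv.sum_comp π fun i => ∑ j ∈ g v π i, v' i j).symm

end RandomPriority

section PoaValuation

variable {n m : ℕ} {ε : ℝ}

def poaValuation (n m : ℕ) (ε : ℝ) (i : Fin n) (j : Fin m) : ℝ :=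
  if (j : ℕ) = (i : ℕ) then 1 - ε else if (j : ℕ) < n then ε / ((n : ℝ) - 1) else 0

def firstItems (n m : ℕ) : Finset (Fin m) := univ.filter fun j => (j : ℕ) < n

theorem mem_firstItems {j : Fin m} : j ∈ firstItems n m ↔ (j : ℕ) < n := by
  simp [firstItems]

theorem card_firstItems (h : n ≤ m) : #(firstItems n m) = n := by
  rw [firstItems, Fin.card_filter_val_lt, min_eq_right h]

theorem poaValuation_eq_zero (i : Fin n) {j : Fin m} (hj : j ∉ firstItems n m) :
    poaValuation n m ε i j = 0 := by
  rw [mem_firstItems] at hj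
  have : (j : ℕ) ≠ i := by omega
  simp [poaValuation, this, hj]

theorem poaValuation_pos (hε0 : 0 < ε) (hε1 : ε < 1) (i : Fin n) {j : Fin m}
    (hj : j ∈ firstItems n m) : 0 < poaValuation n m ε i j := by
  rw [mem_firstItems] at hj
  unfold poaValuation
  split_ifs with hji
  · linarith
  · have : (2 : ℝ) ≤ n := by exact_mod_cast (show 2 ≤ n by omega)
    have : (0 : ℝ) < n - 1 := by linarith
    positivity

theorem sum_firstItems_poaValuation (hn : 2 ≤ n) (hnm : n ≤ m) (i : Fin n) :
    ∑ j ∈ firstItems n m, poaValuation n m ε i j = 1 := by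
  set i' : Fin m := Fin.castLE hnm i
  have hi' : i' ∈ firstItems n m := mem_firstItems.mpr i.isLt
  have hrest (j) (hj : j ∈ (firstItems n m).erase i') :
      poaValuation n m ε i j = ε / ((n : ℝ) - 1) := by
    obtain ⟨hji, hj⟩ := mem_erase.mp hj
    have : (j : ℕ) ≠ i := fun h => hji (Fin.ext h)
    simp [poaValuation, this, mem_firstItems.mp hj]
  have hcard : ((#((firstItems n m).erase i') : ℕ) : ℝ) = n - 1 := by
    rw [card_erase_of_mem hi', card_firstItems hnm, Nat.cast_sub (by omega), Nat.cast_one]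
  have hn1 : (n : ℝ) - 1 ≠ 0 := by
    have : (2 : ℝ) ≤ n := by exact_mod_cast hn
    linarith
  rw [← add_sum_erase _ _ hi', sum_congr rfl hrest, sum_const, nsmul_eq_mul, hcard]
  simp only [poaValuation, i', Fin.val_castLE, if_true]
  field_simp
  ring

theorem isUnitSum_poaValuation (hn : 2 ≤ n) (hnm : n ≤ m) (hε0 : 0 < ε) (hε1 : ε < 1)
    (i : Fin n) : IsUnitSum (poaValuation n m ε i) := by
  classical
  refine ⟨fun j => ?_, ?_⟩
  · by_cases hj : j ∈ firstItems n m
    · exact (poaValuation_pos hε0 hε1 i hj).le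
    · exact (poaValuation_eq_zero i hj).ge
  · rw [← sum_subset (subset_univ _) fun j _ hj => poaValuation_eq_zero i hj]
    exact sum_firstItems_poaValuation hn hnm i

theorem iSup_poaValuation (hn : 2 ≤ n) (hε0 : 0 < ε) (hε1 : ε < 1 / 2) (j : Fin m) :
    ⨆ i, poaValuation n m ε i j = if (j : ℕ) < n then 1 - ε else 0 := by
  have : Nonempty (Fin n) := ⟨⟨0, Nat.zero_lt_of_lt hn⟩⟩
  split_ifs with hj
  · have hother : ε / ((n : ℝ) - 1) ≤ 1 - ε := by
      have : (1 : ℝ) ≤ n - 1 := by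
        have : (2 : ℝ) ≤ n := by exact_mod_cast hn
        linarith
      linarith [div_le_self hε0.le this]
    refine le_antisymm (ciSup_le fun i => ?_) ?_
    · unfold poaValuation
      split_ifs <;> linarith
    · refine le_ciSup_of_le (Set.finite_range _).bddAbove ⟨j, hj⟩ ?_
      simp [poaValuation]
  · simp only [poaValuation_eq_zero _ (mt mem_firstItems.mp hj), ciSup_const]

theorem sum_iSup_poaValuation (hn : 2 ≤ n) (hnm : n ≤ m) (hε0 : 0 < ε) (hε1 : ε < 1 / 2) :
    ∑ j, ⨆ i, poaValuation n m ε i j = n * (1 - ε) := by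
  simp only [iSup_poaValuation hn hε0 hε1, ← sum_filter, sum_const, nsmul_eq_mul]
  rw [← firstItems, card_firstItems hnm]

end PoaValuation

section RandomPriorityOnPoaValuation

variable {n : ℕ} {ε : ℝ}
  {g : (Fin n → Fin (n ^ 2) → ℝ) → Equiv.Perm (Fin n) → Fin n → Finset (Fin (n ^ 2))}

theorem IsRPSelection.pick_first_eq_firstItems (hg : IsRPSelection n (n ^ 2) g) (h0 : 0 < n)
    (hε0 : 0 < ε) (hε1 : ε < 1) {v : Fin n → Fin (n ^ 2) → ℝ} {π : Equiv.Perm (Fin n)}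
    (hv : v (π ⟨0, h0⟩) = poaValuation n (n ^ 2) ε (π ⟨0, h0⟩)) :
    g v π (π ⟨0, h0⟩) = firstItems n (n ^ 2) := by
  have hnm : n ≤ n ^ 2 := Nat.le_self_pow two_ne_zero n
  refine hg.pick_first_eq h0 ?_ (fun j hj => ?_) (fun j hj => ?_)
  · rw [card_firstItems hnm, pow_two, Nat.mul_div_cancel _ h0]
  · exact hv ▸ poaValuation_pos hε0 hε1 _ hj
  · exact hv ▸ poaValuation_eq_zero _ hj

theorem IsRPSelection.sum_pick_poaValuation_eq_zero (hg : IsRPSelection n (n ^ 2) g)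
    (h0 : 0 < n) (hε0 : 0 < ε) (hε1 : ε < 1) {v : Fin n → Fin (n ^ 2) → ℝ}
    {π : Equiv.Perm (Fin n)} (hv : v (π ⟨0, h0⟩) = poaValuation n (n ^ 2) ε (π ⟨0, h0⟩))
    {p : Fin n} (hp : p ≠ ⟨0, h0⟩) (i : Fin n) :
    ∑ j ∈ g v π (π p), poaValuation n (n ^ 2) ε i j = 0 := by
  have hlt : (⟨0, h0⟩ : Fin n) < p :=
    Fin.lt_def.mpr (Nat.pos_of_ne_zero fun h => hp (Fin.ext h))
  have hdisj := hg.disjoint_pick_of_lt v π hlt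
  rw [hg.pick_first_eq_firstItems h0 hε0 hε1 hv] at hdisj
  exact sum_eq_zero fun j hj => poaValuation_eq_zero i (disjoint_right.mp hdisj hj)

theorem IsRPSelection.isRPNash_poaValuation (hg : IsRPSelection n (n ^ 2) g) (hn : 2 ≤ n)
    (hε0 : 0 < ε) (hε1 : ε < 1) :
    IsRPNash n (n ^ 2) g (poaValuation n (n ^ 2) ε) (poaValuation n (n ^ 2) ε) := by
  set v' := poaValuation n (n ^ 2) ε
  have h0 : 0 < n := by omega
  have hnm : n ≤ n ^ 2 := Nat.le_self_pow two_ne_zero n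
  intro i w _
  refine div_le_div_of_nonneg_right (sum_le_sum fun π _ => ?_) (Nat.cast_nonneg _)
  by_cases hfirst : π ⟨0, h0⟩ = i
  · subst hfirst
    rw [hg.pick_first_eq_firstItems h0 hε0 hε1 rfl, sum_firstItems_poaValuation hn hnm,
      ← (isUnitSum_poaValuation hn hnm hε0 hε1 _).2]
    exact sum_le_sum_of_subset_of_nonneg (subset_univ _)
      fun j _ _ => (isUnitSum_poaValuation hn hnm hε0 hε1 _).1 j
  · have hp : π.symm i ≠ ⟨0, h0⟩ := fun h => hfirst (by rw [← h, π.apply_symm_apply])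
    have hzero := hg.sum_pick_poaValuation_eq_zero h0 hε0 hε1
      (v := Function.update v' i w) (Function.update_of_ne hfirst w v') hp i
    rw [π.apply_symm_apply] at hzero
    rw [hzero]
    exact sum_nonneg fun j _ => (isUnitSum_poaValuation hn hnm hε0 hε1 i).1 j

end RandomPriorityOnPoaValuation

/-- **The price of anarchy of Random Priority is at least `n` when `m ≥ n²`.**
With `m = n²`, `ε ∈ (0, 1/2)`, and true valuations `v'ᵢ(i) = 1 − ε`,
`v'ᵢ(j) = ε/(n−1)` for the other items `j < n`, and `v'ᵢ(j) = 0` for `j ≥ n`: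
truthful reporting is a pure Nash equilibrium of Random Priority; for every realized
ordering the first agent receives true value `1` and every other agent receives true
value `0`; the social welfare of truthful reporting equals `1`; and
`OPT(v') = n·(1 − ε)`. -/
theorem rp_poa_lower (n : ℕ) (hn : 2 ≤ n)
    (ε : ℝ) (hε0 : 0 < ε) (hε1 : ε < 1 / 2)
    (g : (Fin n → Fin (n ^ 2) → ℝ) → Equiv.Perm (Fin n) → Fin n → Finset (Fin (n ^ 2)))
    (hg : IsRPSelection n (n ^ 2) g)
    (v' : Fin n → Fin (n ^ 2) → ℝ)
    (hv' : ∀ i j, v' i j =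
      if (j : ℕ) = (i : ℕ) then 1 - ε
      else if (j : ℕ) < n then ε / ((n : ℝ) - 1) else 0) :
    (∀ i, IsUnitSum (v' i)) ∧
    IsRPNash n (n ^ 2) g v' v' ∧
    (∀ π : Equiv.Perm (Fin n),
      (∑ j ∈ g v' π (π ⟨0, by omega⟩), v' (π ⟨0, by omega⟩) j) = 1 ∧
      ∀ pos : Fin n, pos ≠ ⟨0, by omega⟩ →
        (∑ j ∈ g v' π (π pos), v' (π pos) j) = 0) ∧
    (∑ i, RPpayoff n (n ^ 2) g v' v' i) = 1 ∧
    (∑ j, ⨆ i, v' i j) = (n : ℝ) * (1 - ε) := by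
  obtain rfl : v' = poaValuation n (n ^ 2) ε := funext fun i => funext (hv' i)
  set v' := poaValuation n (n ^ 2) ε
  have h0 : 0 < n := by omega
  have hnm : n ≤ n ^ 2 := Nat.le_self_pow two_ne_zero n
  have hε1' : ε < 1 := by linarith
  have hfirst (π : Equiv.Perm (Fin n)) :
      ∑ j ∈ g v' π (π ⟨0, h0⟩), v' (π ⟨0, h0⟩) j = 1 := by
    rw [hg.pick_first_eq_firstItems h0 hε0 hε1' rfl, sum_firstItems_poaValuation hn hnm]
  have hlater (π : Equiv.Perm (Fin n)) (p : Fin n) (hp : p ≠ ⟨0, h0⟩) :=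
    hg.sum_pick_poaValuation_eq_zero h0 hε0 hε1' (π := π) rfl hp (π p)
  have hwelfare (π : Equiv.Perm (Fin n)) : ∑ p, ∑ j ∈ g v' π (π p), v' (π p) j = 1 := by
    rw [sum_eq_single_of_mem _ (mem_univ _) fun p _ hp => hlater π p hp, hfirst]
  refine ⟨isUnitSum_poaValuation hn hnm hε0 hε1', hg.isRPNash_poaValuation hn hε0 hε1',
    fun π => ⟨hfirst π, hlater π⟩, ?_, sum_iSup_poaValuation hn hnm hε0 hε1⟩
  rw [sum_RPpayoff, sum_congr rfl fun π _ => hwelfare π, sum_const, card_univ,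
    Fintype.card_perm, Fintype.card_fin, nsmul_one, div_self (by positivity)]
end
end

section
/- (Equilibrium welfare is at least 1/4 in the symmetric case.) Let m = n, let v′ be unit-sum true valuations, and let v be a pure Nash equilibrium of Cardinal Probabilistic Serial with respect to v′. Then every agent's equilibrium payoff satisfies u_i(v) ≥ 1/(4n); consequently the social welfare of every pure Nash equilibrium is at least 1/4. -/
/-!
Agent `i` can always deviate to `geometricReport σ`, where `σ` ranks the items by its true
values and the item of rank `r` gets weight proportional to `2⁻¹ ^ r`. Items are consumed at
total rate at most `n`, so during the time slot `[k/n, (k+1)/n)` at most `k` items are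
exhausted and one of the agent's `k + 1` favourite items remains. As any final segment of the
ranking weighs at most twice its first item, the agent eats its best remaining item at rate at
least `1/2`, which earns it at least `v'_i(σ k) / 2` per unit of time in slot `k`. Summing over
the slots, the deviation guarantees `1/(2n)` in every execution, hence so does every
equilibrium.
-/

open MeasureTheory

noncomputable section

/-- A Cardinal Probabilistic Serial (CPS) execution for the profile `v` of reports by
`n` agents on `m` items.  `q j t` is the remaining quantity of item `j` at time `t` and
`c i j t` is the consumption rate of agent `i` on item `j` at time `t`. -/
structure CPSExec (n m : ℕ) (v : Fin n → Fin m → ℝ) where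
  q : Fin m → ℝ → ℝ
  c : Fin n → Fin m → ℝ → ℝ
  q_mem : ∀ j t, t ∈ Set.Icc (0 : ℝ) ((m : ℝ) / (n : ℝ)) → q j t ∈ Set.Icc (0 : ℝ) 1
  c_nonneg : ∀ i j t, 0 ≤ c i j t
  c_integrable : ∀ i j, IntervalIntegrable (c i j) volume 0 ((m : ℝ) / (n : ℝ))
  q_eq : ∀ j t, t ∈ Set.Icc (0 : ℝ) ((m : ℝ) / (n : ℝ)) →
    q j t = 1 - ∫ s in (0 : ℝ)..t, ∑ i, c i j s
  c_zero : ∀ i j t, t ∈ Set.Icc (0 : ℝ) ((m : ℝ) / (n : ℝ)) → ¬ 0 < q j t → c i j t = 0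
  c_prop : ∀ i j t, t ∈ Set.Icc (0 : ℝ) ((m : ℝ) / (n : ℝ)) → 0 < q j t →
    0 < ∑ ℓ ∈ Finset.univ.filter (fun ℓ => 0 < q ℓ t), v i ℓ →
    c i j t = v i j / ∑ ℓ ∈ Finset.univ.filter (fun ℓ => 0 < q ℓ t), v i ℓ
  c_sum : ∀ i t, t ∈ Set.Icc (0 : ℝ) ((m : ℝ) / (n : ℝ)) →
    (Finset.univ.filter (fun ℓ => 0 < q ℓ t)).Nonempty →
    ∑ j ∈ Finset.univ.filter (fun ℓ => 0 < q ℓ t), c i j t = 1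

/-- The consumption time of item `j`: the first time at which item `j` is exhausted. -/
def CPSExec.consTime {n m : ℕ} {v : Fin n → Fin m → ℝ} (E : CPSExec n m v) (j : Fin m) : ℝ :=
  sInf {t : ℝ | t ∈ Set.Icc (0 : ℝ) ((m : ℝ) / (n : ℝ)) ∧ E.q j t = 0}

/-- Agent `i`'s (expected) payoff under true valuations `v'`. -/
def CPSExec.payoff {n m : ℕ} {v : Fin n → Fin m → ℝ} (E : CPSExec n m v)
    (v' : Fin n → Fin m → ℝ) (i : Fin n) : ℝ :=
  ∑ j, v' i j * ∫ s in (0 : ℝ)..((m : ℝ) / (n : ℝ)), E.c i j s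

/-- The single-minded report `û_j` on item `j`. -/
def singleMinded {m : ℕ} (j : Fin m) : Fin m → ℝ := fun ℓ => if ℓ = j then 1 else 0

/-- The profile `v`, together with the fixed CPS execution `E`, is a pure Nash equilibrium
with respect to the true valuations `v'`: for every agent `i` and every unit-sum deviation
`w` there is a CPS execution of the deviated profile in which `i`'s payoff does not
increase (ties resolved adversarially against the deviator). -/
def IsCPSNash {n m : ℕ} (v' v : Fin n → Fin m → ℝ) (E : CPSExec n m v) : Prop :=
  ∀ (i : Fin n) (w : Fin m → ℝ), IsUnitSum w →
    ∃ E' : CPSExec n m (Function.update v i w), E'.payoff v' i ≤ E.payoff v' i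

open Finset

theorem exists_perm_antitone_comp {m : ℕ} (f : Fin m → ℝ) :
    ∃ σ : Equiv.Perm (Fin m), Antitone (f ∘ σ) :=
  ⟨Tuple.sort (OrderDual.toDual ∘ f), Tuple.monotone_sort (OrderDual.toDual ∘ f)⟩

theorem mul_sum_le_integral_of_le_on_Ico {f : ℝ → ℝ} {h : ℝ} (hh : 0 ≤ h) {m : ℕ}
    (b : Fin m → ℝ) (hf : IntervalIntegrable f volume 0 (m * h))
    (hb : ∀ k : Fin m, ∀ x ∈ Set.Ico (k * h) ((k + 1) * h), b k ≤ f x) :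
    h * ∑ k, b k ≤ ∫ x in (0 : ℝ)..m * h, f x := by
  have hpiece : ∀ k < m, IntervalIntegrable f volume (k * h) ((k + 1 : ℕ) * h) := by
    intro k hk
    refine hf.mono_set ?_
    rw [Set.uIcc_of_le (by gcongr; omega), Set.uIcc_of_le (by positivity)]
    exact Set.Icc_subset_Icc (by positivity) (by gcongr; exact_mod_cast hk)
  calc h * ∑ k, b k = ∑ k : Fin m, ∫ _ in (k : ℝ) * h..(k + 1 : ℕ) * h, b k := by
        simp only [intervalIntegral.integral_const, smul_eq_mul, mul_sum]
        push_cast; ring_nf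
    _ ≤ ∑ k : Fin m, ∫ x in (k : ℝ) * h..(k + 1 : ℕ) * h, f x := by
        gcongr with k
        refine intervalIntegral.integral_mono_on_of_le_Ioo (by gcongr; omega)
          intervalIntegrable_const (hpiece k k.isLt) fun x hx => hb k x ?_
        push_cast at hx
        exact Set.Ioo_subset_Ico_self hx
    _ = ∫ x in (0 : ℝ)..m * h, f x := by
        rw [Fin.sum_univ_eq_sum_range (fun k => ∫ x in (k : ℝ) * h..(k + 1 : ℕ) * h, f x),
          intervalIntegral.sum_integral_adjacent_intervals (a := fun k : ℕ => (k : ℝ) * h) hpiece]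
        simp

def geometricReport {m : ℕ} (σ : Equiv.Perm (Fin m)) (ℓ : Fin m) : ℝ :=
  (2⁻¹ : ℝ) ^ (σ.symm ℓ : ℕ) / ∑ r : Fin m, (2⁻¹ : ℝ) ^ (r : ℕ)

section geometricReport

variable {m : ℕ} (σ : Equiv.Perm (Fin m))

theorem geometricReport_pos (ℓ : Fin m) : 0 < geometricReport σ ℓ :=
  div_pos (by positivity) (sum_pos (fun _ _ => by positivity) ⟨ℓ, mem_univ ℓ⟩)

theorem isUnitSum_geometricReport [NeZero m] : IsUnitSum (geometricReport σ) := by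
  refine ⟨fun ℓ => (geometricReport_pos σ ℓ).le, ?_⟩
  unfold geometricReport
  rw [← sum_div, Equiv.sum_comp σ.symm fun r : Fin m => (2⁻¹ : ℝ) ^ (r : ℕ)]
  exact div_self (sum_pos (fun _ _ => by positivity) univ_nonempty).ne'

theorem sum_geometricReport_le {A : Finset (Fin m)} {b : Fin m}
    (hmin : ∀ ℓ ∈ A, σ.symm b ≤ σ.symm ℓ) :
    ∑ ℓ ∈ A, geometricReport σ ℓ ≤ 2 * geometricReport σ b := by
  unfold geometricReport
  rw [← sum_div, ← mul_div_assoc]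
  gcongr
  have hinj : Set.InjOn (fun ℓ => (σ.symm ℓ : ℕ)) A :=
    fun x _ y _ h => σ.symm.injective (Fin.val_injective h)
  have hranks : A.image (fun ℓ => (σ.symm ℓ : ℕ)) ⊆ Ico (σ.symm b : ℕ) m := by
    simp only [image_subset_iff, mem_Ico]
    exact fun ℓ hℓ => ⟨hmin ℓ hℓ, (σ.symm ℓ).isLt⟩
  calc ∑ ℓ ∈ A, (2⁻¹ : ℝ) ^ (σ.symm ℓ : ℕ)
      = ∑ r ∈ A.image (fun ℓ => (σ.symm ℓ : ℕ)), (2⁻¹ : ℝ) ^ r := (sum_image hinj).symm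
    _ ≤ ∑ r ∈ Ico (σ.symm b : ℕ) m, (2⁻¹ : ℝ) ^ r :=
        sum_le_sum_of_subset_of_nonneg hranks fun _ _ _ => by positivity
    _ ≤ (2⁻¹ : ℝ) ^ (σ.symm b : ℕ) / (1 - 2⁻¹) :=
        geom_sum_Ico_le_of_lt_one (by norm_num) (by norm_num)
    _ = 2 * (2⁻¹ : ℝ) ^ (σ.symm b : ℕ) := by ring

end geometricReport

namespace CPSExec

variable {n m : ℕ} {v : Fin n → Fin m → ℝ} (E : CPSExec n m v)

def remaining (t : ℝ) : Finset (Fin m) := univ.filter fun ℓ => 0 < E.q ℓ t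

variable {E}

theorem mem_remaining {ℓ : Fin m} {t : ℝ} : ℓ ∈ E.remaining t ↔ 0 < E.q ℓ t := by
  simp [remaining]

theorem intervalIntegrable_c (i : Fin n) (j : Fin m) {a b : ℝ} (ha : 0 ≤ a) (hab : a ≤ b)
    (hb : b ≤ m / n) : IntervalIntegrable (E.c i j) volume a b := by
  refine (E.c_integrable i j).mono_set ?_
  rw [Set.uIcc_of_le hab, Set.uIcc_of_le (ha.trans (hab.trans hb))]
  exact Set.Icc_subset_Icc ha hb

theorem sum_c_le_one (i : Fin n) {t : ℝ} (ht : t ∈ Set.Icc (0 : ℝ) (m / n)) :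
    ∑ j, E.c i j t ≤ 1 := by
  have hsupp : ∑ j ∈ E.remaining t, E.c i j t = ∑ j, E.c i j t :=
    sum_subset (subset_univ _) fun j _ hj => E.c_zero i j t ht (mt mem_remaining.2 hj)
  rw [← hsupp]
  rcases (E.remaining t).eq_empty_or_nonempty with hA | hA
  · simp [hA]
  · exact (E.c_sum i t ht hA).le

theorem card_compl_remaining_le {s : ℝ} (hs : s ∈ Set.Icc (0 : ℝ) (m / n)) :
    ((E.remaining s)ᶜ.card : ℝ) ≤ n * s := by
  have hint : ∀ j, IntervalIntegrable (fun t => ∑ i, E.c i j t) volume 0 s := fun j => by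
    simpa only [← Finset.sum_apply] using IntervalIntegrable.sum univ
      fun i _ => intervalIntegrable_c i j le_rfl hs.1 hs.2
  have hexhausted : ∀ ℓ ∈ (E.remaining s)ᶜ, ∫ t in (0 : ℝ)..s, ∑ i, E.c i ℓ t = 1 := by
    intro ℓ hℓ
    have hq : E.q ℓ s = 0 :=
      le_antisymm (not_lt.1 (mt mem_remaining.2 (mem_compl.1 hℓ))) (E.q_mem ℓ s hs).1
    linarith [E.q_eq ℓ s hs]
  calc ((E.remaining s)ᶜ.card : ℝ)
        = ∑ ℓ ∈ (E.remaining s)ᶜ, ∫ t in (0 : ℝ)..s, ∑ i, E.c i ℓ t := by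
        rw [sum_congr rfl hexhausted]; simp
    _ ≤ ∑ ℓ, ∫ t in (0 : ℝ)..s, ∑ i, E.c i ℓ t :=
        sum_le_sum_of_subset_of_nonneg (subset_univ _) fun j _ _ =>
          intervalIntegral.integral_nonneg hs.1 fun t _ =>
            sum_nonneg fun i _ => E.c_nonneg i j t
    _ = ∫ t in (0 : ℝ)..s, ∑ ℓ, ∑ i, E.c i ℓ t :=
        (intervalIntegral.integral_finsetSum fun j _ => hint j).symm
    _ ≤ ∫ _ in (0 : ℝ)..s, (n : ℝ) := by
        refine intervalIntegral.integral_mono_on hs.1 ?_ intervalIntegrable_const fun t ht => ?_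
        · simpa only [← Finset.sum_apply] using IntervalIntegrable.sum univ fun j _ => hint j
        · calc ∑ ℓ, ∑ i, E.c i ℓ t = ∑ i, ∑ ℓ, E.c i ℓ t := sum_comm
            _ ≤ ∑ _i : Fin n, (1 : ℝ) :=
                sum_le_sum fun i _ => sum_c_le_one i ⟨ht.1, ht.2.trans hs.2⟩
            _ = n := by simp
    _ = n * s := by simp [mul_comm]

theorem exists_remaining_rank_le_of_lt (σ : Equiv.Perm (Fin m)) {s : ℝ}
    (hs : s ∈ Set.Icc (0 : ℝ) (m / n)) (k : Fin m) (hk : n * s < k + 1) :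
    ∃ b ∈ E.remaining s, σ.symm b ≤ k ∧ ∀ ℓ ∈ E.remaining s, σ.symm b ≤ σ.symm ℓ := by
  have hexists : ∃ ℓ ∈ E.remaining s, σ.symm ℓ ≤ k := by
    by_contra! hall
    have hsub : (Iic k).map σ.toEmbedding ⊆ (E.remaining s)ᶜ := by
      simp only [subset_iff, mem_compl]
      exact fun j hj hmem => (hall _ hmem).not_ge (by simpa using hj)
    have hcard := card_le_card hsub
    rw [card_map, Fin.card_Iic] at hcard
    have := card_compl_remaining_le (E := E) hs
    have : ((k : ℕ) + 1 : ℝ) ≤ ((E.remaining s)ᶜ.card : ℝ) := by exact_mod_cast hcard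
    linarith
  obtain ⟨ℓ, hℓ, hℓk⟩ := hexists
  obtain ⟨b, hb, hmin⟩ := exists_min_image (E.remaining s) σ.symm ⟨ℓ, hℓ⟩
  exact ⟨b, hb, (hmin ℓ hℓ).trans hℓk, hmin⟩

theorem inv_two_le_c_of_geometricReport {i : Fin n} {σ : Equiv.Perm (Fin m)}
    (hi : v i = geometricReport σ) {s : ℝ} (hs : s ∈ Set.Icc (0 : ℝ) (m / n)) {b : Fin m}
    (hb : b ∈ E.remaining s) (hmin : ∀ ℓ ∈ E.remaining s, σ.symm b ≤ σ.symm ℓ) :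
    2⁻¹ ≤ E.c i b s := by
  have hpos : 0 < ∑ ℓ ∈ E.remaining s, v i ℓ := by
    rw [hi]; exact sum_pos (fun ℓ _ => geometricReport_pos σ ℓ) ⟨b, hb⟩
  have htail : ∑ ℓ ∈ E.remaining s, v i ℓ ≤ 2 * v i b := by
    rw [hi]; exact sum_geometricReport_le σ hmin
  rw [E.c_prop i b s hs (mem_remaining.1 hb) hpos]
  exact (le_div_iff₀ hpos).2 (by linarith)

theorem payoff_eq_integral (v' : Fin n → Fin m → ℝ) (i : Fin n) :
    E.payoff v' i = ∫ s in (0 : ℝ)..m / n, ∑ j, v' i j * E.c i j s := by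
  rw [payoff, intervalIntegral.integral_finsetSum fun j _ => (E.c_integrable i j).const_mul _]
  simp only [intervalIntegral.integral_const_mul]

theorem le_payoff_rate_of_geometricReport {v' : Fin n → Fin m → ℝ} {i : Fin n}
    {σ : Equiv.Perm (Fin m)} (hv' : ∀ j, 0 ≤ v' i j) (hσ : Antitone (v' i ∘ σ))
    (hi : v i = geometricReport σ) {s : ℝ} (hs : s ∈ Set.Icc (0 : ℝ) (m / n)) (k : Fin m)
    (hk : n * s < k + 1) :
    v' i (σ k) / 2 ≤ ∑ j, v' i j * E.c i j s := by
  obtain ⟨b, hb, hbk, hmin⟩ := exists_remaining_rank_le_of_lt (E := E) σ hs k hk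
  have hval : v' i (σ k) ≤ v' i b := by simpa using hσ hbk
  have hrate := inv_two_le_c_of_geometricReport hi hs hb hmin
  calc v' i (σ k) / 2 ≤ v' i b * E.c i b s := by nlinarith [hv' b]
    _ ≤ ∑ j, v' i j * E.c i j s :=
        single_le_sum (fun j _ => mul_nonneg (hv' j) (E.c_nonneg i j s)) (mem_univ b)

theorem one_div_two_mul_le_payoff_of_geometricReport (hn : 0 < n) {v' : Fin n → Fin m → ℝ}
    {i : Fin n} {σ : Equiv.Perm (Fin m)} (hv' : IsUnitSum (v' i)) (hσ : Antitone (v' i ∘ σ))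
    (hi : v i = geometricReport σ) :
    1 / (2 * n) ≤ E.payoff v' i := by
  have hn' : (0 : ℝ) < n := by exact_mod_cast hn
  have hintegrable :
      IntervalIntegrable (fun s => ∑ j, v' i j * E.c i j s) volume 0 (m * (1 / n)) := by
    rw [mul_one_div]
    simpa only [Finset.sum_fn] using
      IntervalIntegrable.sum univ fun j _ => (E.c_integrable i j).const_mul (v' i j)
  have hslot : ∀ k : Fin m, ∀ s ∈ Set.Ico (k * (1 / n : ℝ)) ((k + 1) * (1 / n)),
      v' i (σ k) / 2 ≤ ∑ j, v' i j * E.c i j s := by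
    intro k s hs
    simp only [mul_one_div, Set.mem_Ico, div_le_iff₀ hn', lt_div_iff₀ hn'] at hs
    refine le_payoff_rate_of_geometricReport hv'.1 hσ hi ⟨?_, ?_⟩ k (by linarith)
    · nlinarith
    · rw [le_div_iff₀ hn']
      have : (k : ℝ) + 1 ≤ m := by exact_mod_cast k.isLt
      linarith
  calc 1 / (2 * n) = 1 / n * ∑ k, v' i (σ k) / 2 := by
        rw [← sum_div, Equiv.sum_comp σ (v' i), hv'.2]; ring
    _ ≤ ∫ s in (0 : ℝ)..m * (1 / n), ∑ j, v' i j * E.c i j s :=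
        mul_sum_le_integral_of_le_on_Ico (by positivity) _ hintegrable hslot
    _ = E.payoff v' i := by rw [mul_one_div, payoff_eq_integral]

end CPSExec

theorem IsCPSNash.one_div_two_mul_le_payoff {n m : ℕ} {v' v : Fin n → Fin m → ℝ}
    {E : CPSExec n m v} (hNE : IsCPSNash v' v E) (hn : 0 < n) {i : Fin n}
    (hv' : IsUnitSum (v' i)) : 1 / (2 * n) ≤ E.payoff v' i := by
  have : NeZero m := ⟨by rintro rfl; simpa using hv'.2⟩
  obtain ⟨σ, hσ⟩ := exists_perm_antitone_comp (v' i)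
  obtain ⟨E', hE'⟩ := hNE i _ (isUnitSum_geometricReport σ)
  exact (E'.one_div_two_mul_le_payoff_of_geometricReport hn hv' hσ
    (Function.update_self i _ v)).trans hE'

theorem cps_equilibrium_welfare_quarter_general (n : ℕ) (hn : 1 ≤ n) (v' v : Fin n → Fin n → ℝ)
    (hv' : ∀ i, IsUnitSum (v' i))
    (E : CPSExec n n v) (hNE : IsCPSNash v' v E) :
    (∀ i, 1 / (4 * (n : ℝ)) ≤ E.payoff v' i) ∧ (1 / 4 : ℝ) ≤ ∑ i, E.payoff v' i := by
  have hn' : (0 : ℝ) < n := by exact_mod_cast hn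
  have hpayoff i : 1 / (2 * n) ≤ E.payoff v' i := hNE.one_div_two_mul_le_payoff hn (hv' i)
  refine ⟨fun i => le_trans ?_ (hpayoff i), ?_⟩
  · gcongr; norm_num
  · calc (1 / 4 : ℝ) ≤ ∑ _i : Fin n, 1 / (2 * (n : ℝ)) := by
          rw [sum_const, card_univ, Fintype.card_fin, nsmul_eq_mul]
          field_simp; norm_num
      _ ≤ ∑ i, E.payoff v' i := sum_le_sum fun i _ => hpayoff i

/-- **Equilibrium welfare is at least `1/4` in the symmetric case.**  Let `m = n`, let
`v'` be unit-sum true valuations, and let `v` (with execution `E`) be a pure Nash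
equilibrium of CPS with respect to `v'`.  Then every agent's payoff is at least `1/(4n)`,
and hence the social welfare of every pure Nash equilibrium is at least `1/4`. -/
theorem cps_equilibrium_welfare_quarter (n : ℕ) (hn : 1 ≤ n) (v' v : Fin n → Fin n → ℝ)
    (hv' : ∀ i, IsUnitSum (v' i)) (hv : ∀ i, IsUnitSum (v i))
    (E : CPSExec n n v) (hNE : IsCPSNash v' v E) :
    (∀ i, 1 / (4 * (n : ℝ)) ≤ E.payoff v' i) ∧ (1 / 4 : ℝ) ≤ ∑ i, E.payoff v' i :=
  cps_equilibrium_welfare_quarter_general n hn v' v hv' E hNE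
end
end

section
/- (Combinatorial grouping lower bound.) Let N ≥ 1 and let X_1, X_2, …, X_K be pairwise disjoint nonempty subsets of {1,…,N}. For each i, let r_i = min over 1 ≤ ℓ ≤ |X_i| of (s_i(ℓ)/ℓ), where s_i(ℓ) denotes the ℓ-th smallest element of X_i. Then ∑_{i=1}^K r_i ≥ K² / (4·(⌊log₂ N⌋ + 1)). -/
/-! If `r i ≤ t`, then some prefix of `X i`, of length `ℓ i`, lies in `[1, t ℓ i]`. Sort the indices
by the dyadic scale `⌊log₂ ℓ i⌋`, which takes at most `⌊log₂ N⌋ + 1` values. Within scale `j` the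
sets `X i` contribute disjoint blocks of at least `2 ^ j` integers in `[1, t 2 ^ (j + 1)]`, so at
most `2 t` indices share a scale, and at most `2 t (⌊log₂ N⌋ + 1)` of the `r i` are `≤ t`. Hence the
`k`-th smallest `r i` is at least `k / (2 (⌊log₂ N⌋ + 1))`, and summing over `k` gives the bound. -/

/-- For a finite nonempty set `X` of positive integers, `minRatio X` is the minimum over
`1 ≤ ℓ ≤ |X|` of `s(ℓ)/ℓ`, where `s(ℓ)` is the `ℓ`-th smallest element of `X`. -/
noncomputable def minRatio (X : Finset ℕ) : ℝ :=
  sInf ((fun ℓ : ℕ => (((X.sort (· ≤ ·)).getD (ℓ - 1) 0 : ℕ) : ℝ) / (ℓ : ℝ)) ''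
    Set.Icc 1 X.card)

open Finset

theorem le_card_filter_le_getD_sort (X : Finset ℕ) {k : ℕ} (hk : k < #X) :
    k + 1 ≤ #{x ∈ X | x ≤ (X.sort (· ≤ ·)).getD k 0} := by
  have hlen : (X.sort (· ≤ ·)).length = #X := X.length_sort _
  rw [List.getD_eq_getElem _ _ (hlen ▸ hk)]
  calc k + 1 = #(range (k + 1)) := (card_range _).symm
    _ ≤ _ := card_le_card_of_injOn (fun m => (X.sort (· ≤ ·)).getD m 0)
      (fun m hm => by
        rw [coe_range, Set.mem_Iio] at hm
        simp only [mem_coe, mem_filter]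
        rw [List.getD_eq_getElem _ _ (by omega), ← mem_sort (· ≤ ·)]
        exact ⟨List.getElem_mem _, (X.pairwise_sort (· ≤ ·)).rel_get_of_le
          (a := ⟨m, by omega⟩) (b := ⟨k, by omega⟩) (Nat.le_of_lt_succ hm)⟩)
      (fun m hm m' hm' h => by
        rw [coe_range, Set.mem_Iio] at hm hm'
        simp only at h
        rwa [List.getD_eq_getElem _ _ (by omega), List.getD_eq_getElem _ _ (by omega),
          (X.sort_nodup _).getElem_inj_iff] at h)

theorem exists_minRatio_eq (X : Finset ℕ) (hX : X.Nonempty) :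
    ∃ ℓ, 1 ≤ ℓ ∧ ℓ ≤ #X ∧
      minRatio X = ((X.sort (· ≤ ·)).getD (ℓ - 1) 0 : ℝ) / ℓ := by
  obtain ⟨ℓ, ⟨hℓ1, hℓX⟩, hmin⟩ := Set.Nonempty.csInf_mem
    ((Set.nonempty_Icc.2 hX.card_pos).image
      (fun ℓ : ℕ => (((X.sort (· ≤ ·)).getD (ℓ - 1) 0 : ℕ) : ℝ) / (ℓ : ℝ)))
    ((Set.finite_Icc 1 #X).image _)
  exact ⟨ℓ, hℓ1, hℓX, hmin.symm⟩

theorem minRatio_nonneg {X : Finset ℕ} (hX : X.Nonempty) : 0 ≤ minRatio X := by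
  obtain ⟨ℓ, -, -, h⟩ := exists_minRatio_eq X hX
  rw [h]
  positivity

theorem exists_le_card_filter_of_minRatio_le {X : Finset ℕ} (hX : X.Nonempty) {t : ℝ}
    (h : minRatio X ≤ t) : ∃ ℓ, 1 ≤ ℓ ∧ ℓ ≤ #X ∧ ℓ ≤ #{x ∈ X | x ≤ ⌊t * ℓ⌋₊} := by
  obtain ⟨ℓ, hℓ1, hℓX, hmin⟩ := exists_minRatio_eq X hX
  refine ⟨ℓ, hℓ1, hℓX, ?_⟩
  have hs : (X.sort (· ≤ ·)).getD (ℓ - 1) 0 ≤ ⌊t * ℓ⌋₊ := by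
    refine Nat.le_floor ?_
    rw [← div_le_iff₀ (by positivity)]
    exact hmin ▸ h
  calc ℓ = ℓ - 1 + 1 := by omega
    _ ≤ _ := le_card_filter_le_getD_sort X (by omega)
    _ ≤ _ := card_le_card <| monotone_filter_right _ fun x _ hx => hx.trans hs

theorem card_mul_le_of_le_card_filter_le {ι : Type*} {T : Finset ι} {X : ι → Finset ℕ}
    (hdisj : (T : Set ι).PairwiseDisjoint X) (hpos : ∀ i ∈ T, ∀ x ∈ X i, 0 < x) {m M : ℕ}
    (h : ∀ i ∈ T, m ≤ #{x ∈ X i | x ≤ M}) : #T * m ≤ M := by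
  classical
  have hsub : T.biUnion (fun i => {x ∈ X i | x ≤ M}) ⊆ Icc 1 M :=
    biUnion_subset.2 fun i hi x hx => by
      rw [mem_filter] at hx
      exact mem_Icc.2 ⟨hpos i hi x hx.1, hx.2⟩
  calc #T * m = ∑ i ∈ T, m := by rw [sum_const, smul_eq_mul]
    _ ≤ ∑ i ∈ T, #{x ∈ X i | x ≤ M} := sum_le_sum h
    _ = #(T.biUnion fun i => {x ∈ X i | x ≤ M}) :=
      (card_biUnion (hdisj.mono fun i => filter_subset _ _)).symm
    _ ≤ M := (card_le_card hsub).trans (by simp)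

theorem card_le_of_minRatio_le {ι : Type*} {S : Finset ι} {X : ι → Finset ℕ} {N : ℕ}
    (hsub : ∀ i ∈ S, X i ⊆ Icc 1 N) (hne : ∀ i ∈ S, (X i).Nonempty)
    (hdisj : (S : Set ι).PairwiseDisjoint X) {t : ℝ} (ht : 0 ≤ t)
    (hr : ∀ i ∈ S, minRatio (X i) ≤ t) :
    (#S : ℝ) ≤ 2 * (Nat.log 2 N + 1) * t := by
  classical
  choose! ℓ hℓ1 hℓX hℓt using fun i hi =>
    exists_le_card_filter_of_minRatio_le (hne i hi) (hr i hi)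
  have hmaps : ∀ i ∈ S, Nat.log 2 (ℓ i) ∈ range (Nat.log 2 N + 1) := fun i hi =>
    mem_range_succ_iff.2 <| Nat.log_mono_right <|
      (hℓX i hi).trans <| (card_le_card (hsub i hi)).trans (by simp)
  obtain ⟨j, -, hj⟩ := exists_le_card_fiber_of_nsmul_le_card_of_maps_to hmaps
    nonempty_range_add_one (b := (#S : ℝ) / (Nat.log 2 N + 1)) <| by
      rw [card_range, nsmul_eq_mul, Nat.cast_add_one, mul_div_cancel₀ _ (by positivity)]
  have hT : #{i ∈ S | Nat.log 2 (ℓ i) = j} * 2 ^ j ≤ ⌊t * 2 ^ (j + 1)⌋₊ := by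
    refine card_mul_le_of_le_card_filter_le (hdisj.subset (filter_subset _ _))
      (fun i hi x hx => (mem_Icc.1 (hsub i (filter_subset _ _ hi) hx)).1) fun i hi => ?_
    obtain ⟨hiS, rfl⟩ := mem_filter.1 hi
    calc 2 ^ Nat.log 2 (ℓ i) ≤ ℓ i := Nat.pow_log_le_self 2 (Nat.one_le_iff_ne_zero.1 (hℓ1 i hiS))
      _ ≤ #{x ∈ X i | x ≤ ⌊t * ℓ i⌋₊} := hℓt i hiS
      _ ≤ _ := card_le_card <| monotone_filter_right _ fun x _ hx => hx.trans <|
          Nat.floor_le_floor <| mul_le_mul_of_nonneg_left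
            (by exact_mod_cast (Nat.lt_pow_succ_log_self one_lt_two _).le) ht
  have hfiber : (#{i ∈ S | Nat.log 2 (ℓ i) = j} : ℝ) ≤ 2 * t := by
    refine le_of_mul_le_mul_right ?_ (by positivity : (0 : ℝ) < 2 ^ j)
    calc _ ≤ t * 2 ^ (j + 1) := by
          exact_mod_cast (Nat.cast_le.2 hT).trans (Nat.floor_le (by positivity))
      _ = 2 * t * 2 ^ j := by ring
  calc (#S : ℝ) ≤ #{i ∈ S | Nat.log 2 (ℓ i) = j} * (Nat.log 2 N + 1) :=
        (div_le_iff₀ (by positivity)).1 hj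
    _ ≤ 2 * t * (Nat.log 2 N + 1) := by gcongr
    _ = _ := by ring

theorem sq_card_div_le_sum_of_card_le_mul_max {ι : Type*} (S : Finset ι) (r : ι → ℝ) {c : ℝ}
    (hc : 0 < c) (h : ∀ S' ⊆ S, ∀ i ∈ S', (∀ j ∈ S', r j ≤ r i) → (#S' : ℝ) ≤ c * r i) :
    (#S : ℝ) ^ 2 / (2 * c) ≤ ∑ i ∈ S, r i := by
  classical
  induction S using Finset.strongInduction with
  | H S ih =>
  rcases S.eq_empty_or_nonempty with rfl | hS
  · simp
  obtain ⟨i, hi, hmax⟩ := S.exists_max_image r hS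
  have hcard : (#S : ℝ) ≤ c * r i := h S subset_rfl i hi hmax
  have hrest := ih (S.erase i) (erase_ssubset hi) fun S' hS' =>
    h S' (hS'.trans (erase_subset i S))
  rw [cast_card_erase_of_mem hi] at hrest
  rw [← add_sum_erase S r hi]
  calc (#S : ℝ) ^ 2 / (2 * c) ≤ r i + ((#S : ℝ) - 1) ^ 2 / (2 * c) := by
        rw [div_le_iff₀ (by positivity), add_mul, div_mul_cancel₀ _ (by positivity)]
        nlinarith
    _ ≤ _ := by gcongr

theorem grouping_lower_bound_general (N : ℕ) (K : ℕ)
    (X : Fin K → Finset ℕ)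
    (hsub : ∀ i, X i ⊆ Finset.Icc 1 N)
    (hne : ∀ i, (X i).Nonempty)
    (hdisj : ∀ i i', i ≠ i' → Disjoint (X i) (X i')) :
    (K : ℝ) ^ 2 / (4 * ((Nat.log 2 N : ℝ) + 1)) ≤ ∑ i, minRatio (X i) := by
  have h := sq_card_div_le_sum_of_card_le_mul_max univ (fun i => minRatio (X i))
    (c := 2 * (Nat.log 2 N + 1)) (by positivity) fun S _ i _ hmax =>
      card_le_of_minRatio_le (fun i _ => hsub i) (fun i _ => hne i)
        (fun i _ j _ hij => hdisj i j hij) (minRatio_nonneg (hne i)) hmax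
  rwa [card_univ, Fintype.card_fin, ← mul_assoc, show (2 : ℝ) * 2 = 4 by norm_num] at h

/-- **Combinatorial grouping lower bound.**  Let `X 1, …, X K` be pairwise disjoint
nonempty subsets of `{1,…,N}` and for each `i` let `r i = min_{1 ≤ ℓ ≤ |X i|} s_i(ℓ)/ℓ`
(where `s_i(ℓ)` is the `ℓ`-th smallest element of `X i`).  Then
`∑ i, r i ≥ K² / (4·(⌊log₂ N⌋ + 1))`. -/
theorem grouping_lower_bound (N : ℕ) (hN : 1 ≤ N) (K : ℕ)
    (X : Fin K → Finset ℕ)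
    (hsub : ∀ i, X i ⊆ Finset.Icc 1 N)
    (hne : ∀ i, (X i).Nonempty)
    (hdisj : ∀ i i', i ≠ i' → Disjoint (X i) (X i')) :
    (K : ℝ) ^ 2 / (4 * ((Nat.log 2 N : ℝ) + 1)) ≤ ∑ i, minRatio (X i) :=
  grouping_lower_bound_general N K X hsub hne hdisj
end
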